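/- arXiv:1705.05866 — 13 statements merged into one kernel-verified Lean document; each statement's English description precedes it below -/
import Mathlib

section
/- Let P and Q be orthogonal projections on a complex Hilbert space H. Then { λ + √λ : λ ∈ σ(PQP) \ {0,1} } ∪ { λ − √λ : λ ∈ σ(PQP) \ {0,1} } ⊆ σ(PQ + QP) ⊆ { λ + √λ : λ ∈ σ(PQP) } ∪ { λ − √λ : λ ∈ σ(PQP) } ∪ {0, 2}. -/
/-!
Put `A = P + Q - 1` and `B = P - Q`. Then `A² + B² = 1`, `AB = -BA` and `PQ + QP = A² + A`, so by
spectral mapping `σ(PQ + QP) = {s² + s : s ∈ σ(A)}`, where `σ(A) ⊆ ℝ` because `A` is self-adjoint.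
Since `B` anticommutes with `A` and `B² = 1 - A²`, the spectrum of `A` is symmetric away from `±1`,
so a square `l = s²` produces both `l + √l` and `l - √l`. Finally `A² = PQP + (1-P)(1-Q)(1-P)` is an
orthogonal sum, and away from `{0, 1}` both summands have the spectrum of `PQP`: this follows from
`σ(xy) \ {0} = σ(yx) \ {0}` and from passing between the corners `exe` and `e(1-x)e`, whose
spectra outside `{0, 1}` correspond under `k ↦ 1 - k`.
-/

namespace spectrum

variable {𝕜 A : Type*} [Field 𝕜] [Ring A] [Algebra 𝕜 A]

lemma mem_add_iff_of_mul_eq_zero {a b : A} (hab : a * b = 0) (hba : b * a = 0) {k : 𝕜}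
    (hk : k ≠ 0) : k ∈ spectrum 𝕜 (a + b) ↔ k ∈ spectrum 𝕜 a ∨ k ∈ spectrum 𝕜 b := by
  have hKa := Algebra.commute_algebraMap_left k a
  have hKb := Algebra.commute_algebraMap_left k b
  set K := algebraMap 𝕜 A k
  have hfactor : (K - a) * (K - b) = K * (K - (a + b)) := by
    simp only [sub_mul, mul_sub, mul_add, hab, ← hKa.eq]
    abel
  have hcomm : Commute (K - a) (K - b) :=
    ((Commute.refl K).sub_right hKb).sub_left (hKa.symm.sub_right (hab.trans hba.symm))
  rw [mem_iff, mem_iff, mem_iff, ← not_and_or, ← hcomm.isUnit_mul_iff, hfactor,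
    (hk.isUnit.map _).mul_left_iff]

lemma one_sub_mem_one_sub_iff {R : Type*} [CommRing R] [Algebra R A] {a : A} {k : R} :
    1 - k ∈ spectrum R (1 - a) ↔ k ∈ spectrum R a := by
  rw [← map_one (algebraMap R A), ← singleton_sub_eq]
  simp

lemma neg_mem_of_anticommute {b c : A} (hbc : b * c = -(c * b)) (hsq : b * b + c * c = 1)
    {t : 𝕜} (ht : t ^ 2 ≠ 1) (hmem : t ∈ spectrum 𝕜 b) : -t ∈ spectrum 𝕜 b := by
  have hTb := Algebra.commute_algebraMap_left t b
  have hTc := Algebra.commute_algebraMap_left t c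
  have hT : algebraMap 𝕜 A (t ^ 2 - 1) = algebraMap 𝕜 A t * algebraMap 𝕜 A t - 1 := by
    rw [map_sub, map_pow, map_one, sq]
  set T := algebraMap 𝕜 A t
  rw [mem_iff] at hmem ⊢
  rw [map_neg, ← neg_add', IsUnit.neg_iff]
  contrapose! hmem
  obtain ⟨u, hu⟩ := hmem
  -- `c` intertwines `T - b` with `T + b`, so `T + b - c (T + b)⁻¹ c` inverts `T - b` up to the
  -- nonzero scalar `t ^ 2 - 1`.
  have hleft : (T - b) * c = c * (T + b) := by
    rw [sub_mul, mul_add, hbc, hTc.eq]; abel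
  have hright : c * (T - b) = (T + b) * c := by
    rw [mul_sub, add_mul, hbc, hTc.eq]; abel
  have hdiff : (T - b) * (T + b) = T * T - 1 + c * c := by
    rw [← hsq, sub_mul, mul_add, mul_add, hTb.eq]; abel
  have hdiff' : (T + b) * (T - b) = T * T - 1 + c * c := by
    rw [← hsq, add_mul, mul_sub, mul_sub, hTb.eq]; abel
  have hur : (T + b) * ↑u⁻¹ = 1 := hu ▸ u.mul_inv
  have hul : ↑u⁻¹ * (T + b) = 1 := hu ▸ u.inv_mul
  have hprod : (T - b) * (T + b - c * ↑u⁻¹ * c) = algebraMap 𝕜 A (t ^ 2 - 1) := by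
    calc _ = (T - b) * (T + b) - c * ((T + b) * ↑u⁻¹) * c := by
          rw [← mul_assoc c, ← hleft]; noncomm_ring
      _ = _ := by rw [hur, hdiff, hT]; noncomm_ring
  have hprod' : (T + b - c * ↑u⁻¹ * c) * (T - b) = algebraMap 𝕜 A (t ^ 2 - 1) := by
    calc _ = (T + b) * (T - b) - c * (↑u⁻¹ * (T + b)) * c := by
          rw [show c * (↑u⁻¹ * (T + b)) * c = c * ↑u⁻¹ * ((T + b) * c) by noncomm_ring,
            ← hright]
          noncomm_ring
      _ = _ := by rw [hul, hdiff', hT]; noncomm_ring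
  have hunit : IsUnit ((T - b) * (T + b - c * ↑u⁻¹ * c)) := hprod ▸ (sub_ne_zero.2 ht).isUnit.map _
  exact ((Commute.isUnit_mul_iff (hprod.trans hprod'.symm)).1 hunit).1

end spectrum

namespace IsIdempotentElem

section Field

variable {𝕜 A : Type*} [Field 𝕜] [Ring A] [Algebra 𝕜 A] {e f p q : A}

lemma one_sub_mem_spectrum_mul_one_sub_mul_iff (he : IsIdempotentElem e) (x : A) {k : 𝕜}
    (hk0 : k ≠ 0) (hk1 : k ≠ 1) :
    1 - k ∈ spectrum 𝕜 (e * (1 - x) * e) ↔ k ∈ spectrum 𝕜 (e * x * e) := by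
  have hsplit : 1 - e * x * e = e * (1 - x) * e + (1 - e) := by
    simp only [mul_sub, sub_mul, mul_one, he.eq]; abel
  have hnot : 1 - k ∉ spectrum 𝕜 (1 - e) := fun h ↦ by
    rcases he.one_sub.spectrum_subset 𝕜 h with h | h
    · exact hk1 (sub_eq_zero.1 h).symm
    · exact hk0 (by simpa using h)
  rw [← spectrum.one_sub_mem_one_sub_iff (a := e * x * e), hsplit,
    spectrum.mem_add_iff_of_mul_eq_zero _ _ (sub_ne_zero.2 hk1.symm), or_iff_left hnot]
  · simp only [mul_sub, sub_mul, mul_one, mul_assoc, he.eq]; abel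
  · simp only [mul_sub, sub_mul, mul_one, one_mul, ← mul_assoc, he.eq]; abel

lemma mem_spectrum_mul_mul_comm (he : IsIdempotentElem e) (hf : IsIdempotentElem f) {k : 𝕜}
    (hk : k ≠ 0) : k ∈ spectrum 𝕜 (e * f * e) ↔ k ∈ spectrum 𝕜 (f * e * f) := by
  have h := spectrum.nonzero_mul_comm (𝕜 := 𝕜) (e * f) (f * e)
  rw [← mul_assoc, mul_assoc e f f, hf.eq, ← mul_assoc, mul_assoc f e e, he.eq] at h
  simpa [hk] using Set.ext_iff.1 h k

lemma mem_spectrum_one_sub_mul_one_sub_mul_one_sub_iff (hp : IsIdempotentElem p)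
    (hq : IsIdempotentElem q) {k : 𝕜} (hk0 : k ≠ 0) (hk1 : k ≠ 1) :
    k ∈ spectrum 𝕜 ((1 - p) * (1 - q) * (1 - p)) ↔ k ∈ spectrum 𝕜 (p * q * p) := by
  rw [← hp.one_sub.one_sub_mem_spectrum_mul_one_sub_mul_iff (1 - q) hk0 hk1, sub_sub_cancel,
    hp.one_sub.mem_spectrum_mul_mul_comm hq (sub_ne_zero.2 hk1.symm),
    hq.one_sub_mem_spectrum_mul_one_sub_mul_iff p hk0 hk1, hq.mem_spectrum_mul_mul_comm hp hk0]

lemma mem_spectrum_add_sub_one_sq_iff (hp : IsIdempotentElem p) (hq : IsIdempotentElem q)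
    {k : 𝕜} (hk0 : k ≠ 0) (hk1 : k ≠ 1) :
    k ∈ spectrum 𝕜 ((p + q - 1) ^ 2) ↔ k ∈ spectrum 𝕜 (p * q * p) := by
  have hsplit : (p + q - 1) ^ 2 = p * q * p + (1 - p) * (1 - q) * (1 - p) := by
    simp only [sq, mul_sub, sub_mul, mul_add, add_mul, one_mul, mul_one, mul_assoc, hp.eq, hq.eq]
    abel
  rw [hsplit, spectrum.mem_add_iff_of_mul_eq_zero _ _ hk0,
    hp.mem_spectrum_one_sub_mul_one_sub_mul_one_sub_iff hq hk0 hk1, or_self]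
  · simp only [mul_assoc]
    rw [← mul_assoc p (1 - p), hp.mul_one_sub_self, zero_mul, mul_zero, mul_zero]
  · simp only [mul_assoc]
    rw [← mul_assoc (1 - p) p, hp.one_sub_mul_self, zero_mul, mul_zero, mul_zero]

lemma neg_mem_spectrum_add_sub_one (hp : IsIdempotentElem p) (hq : IsIdempotentElem q)
    {t : 𝕜} (ht : t ^ 2 ≠ 1) (hmem : t ∈ spectrum 𝕜 (p + q - 1)) :
    -t ∈ spectrum 𝕜 (p + q - 1) := by
  refine spectrum.neg_mem_of_anticommute (c := p - q) ?_ ?_ ht hmem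
  · simp only [mul_sub, sub_mul, mul_add, add_mul, one_mul, mul_one, hp.eq, hq.eq]
    abel
  · simp only [mul_sub, sub_mul, mul_add, add_mul, one_mul, mul_one, hp.eq, hq.eq]
    abel

open Polynomial in
lemma spectrum_mul_add_mul [IsAlgClosed 𝕜] (hp : IsIdempotentElem p) (hq : IsIdempotentElem q) :
    spectrum 𝕜 (p * q + q * p) = (fun s ↦ s ^ 2 + s) '' spectrum 𝕜 (p + q - 1) := by
  have hpoly : p * q + q * p = (p + q - 1) ^ 2 + (p + q - 1) := by
    simp only [sq, mul_sub, sub_mul, mul_add, add_mul, one_mul, mul_one, hp.eq, hq.eq]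
    abel
  have hmap := spectrum.map_polynomial_aeval_of_degree_pos (p + q - 1) (X ^ 2 + X : 𝕜[X])
    (by rw [degree_add_eq_left_of_degree_lt] <;> simp)
  simp only [map_add, map_pow, aeval_X, eval_add, eval_pow, eval_X] at hmap
  rw [hpoly, hmap]

end Field

section CStarAlgebra

variable {A : Type*} [CStarAlgebra A] {p q : A}

lemma ofReal_add_sqrt_mem_spectrum_mul_add_mul (hp : IsIdempotentElem p)
    (hq : IsIdempotentElem q) (hpq : IsSelfAdjoint (p + q)) {l : ℝ}
    (hl : (l : ℂ) ∈ spectrum ℂ (p * q * p)) (hl0 : l ≠ 0) (hl1 : l ≠ 1) :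
    ((l + √l : ℝ) : ℂ) ∈ spectrum ℂ (p * q + q * p) ∧
      ((l - √l : ℝ) : ℂ) ∈ spectrum ℂ (p * q + q * p) := by
  rw [hp.spectrum_mul_add_mul hq]
  obtain ⟨_, ht, htl⟩ : ∃ t ∈ spectrum ℂ (p + q - 1), t ^ 2 = l := by
    rw [← Set.mem_image, ← spectrum.map_pow_of_pos _ two_pos,
      hp.mem_spectrum_add_sub_one_sq_iff hq (by exact_mod_cast hl0) (by exact_mod_cast hl1)]
    exact hl
  obtain ⟨r, rfl⟩ : ∃ r : ℝ, _ = (r : ℂ) := ⟨_, (hpq.sub (.one _)).mem_spectrum_eq_re ht⟩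
  replace htl : r ^ 2 = l := by exact_mod_cast htl
  have hroot_mem : ∀ ε : ℝ, ε ^ 2 = l → (ε : ℂ) ∈ spectrum ℂ (p + q - 1) := by
    intro ε hε
    rcases sq_eq_sq_iff_eq_or_eq_neg.1 (hε.trans htl.symm) with rfl | rfl
    · exact ht
    · rw [Complex.ofReal_neg]
      exact hp.neg_mem_spectrum_add_sub_one hq (by exact_mod_cast htl ▸ hl1) ht
  have hsqrt : √l ^ 2 = l := Real.sq_sqrt (htl ▸ sq_nonneg r)
  refine ⟨⟨_, hroot_mem _ hsqrt, ?_⟩, ⟨_, hroot_mem (-√l) (by rw [neg_sq, hsqrt]), ?_⟩⟩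
  · push_cast
    rw [← Complex.ofReal_pow, hsqrt]
  · push_cast
    rw [neg_sq, ← Complex.ofReal_pow, hsqrt]
    ring

lemma exists_add_sqrt_eq_of_mem_spectrum_mul_add_mul (hp : IsIdempotentElem p)
    (hq : IsIdempotentElem q) (hpq : IsSelfAdjoint (p + q)) {z : ℂ}
    (hz : z ∈ spectrum ℂ (p * q + q * p)) (hz0 : z ≠ 0) (hz2 : z ≠ 2) :
    ∃ l : ℝ, (l : ℂ) ∈ spectrum ℂ (p * q * p) ∧
      (z = ((l + √l : ℝ) : ℂ) ∨ z = ((l - √l : ℝ) : ℂ)) := by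
  rw [hp.spectrum_mul_add_mul hq] at hz
  obtain ⟨_, hs, rfl⟩ := hz
  obtain ⟨r, rfl⟩ : ∃ r : ℝ, _ = (r : ℂ) := ⟨_, (hpq.sub (.one _)).mem_spectrum_eq_re hs⟩
  have hr0 : r ^ 2 ≠ 0 := fun h ↦ hz0 (by simp [pow_eq_zero_iff two_ne_zero |>.1 h])
  have hr1 : r ^ 2 ≠ 1 := fun h ↦ by
    rcases sq_eq_one_iff.1 h with rfl | rfl
    · exact hz2 (by norm_num)
    · exact hz0 (by norm_num)
  refine ⟨r ^ 2, (hp.mem_spectrum_add_sub_one_sq_iff hq ?_ ?_).1 ?_, ?_⟩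
  · exact_mod_cast hr0
  · exact_mod_cast hr1
  · exact_mod_cast spectrum.pow_mem_pow _ 2 hs
  · rw [Real.sqrt_sq_eq_abs]
    rcases abs_choice r with h | h
    · left; rw [h]; push_cast; ring
    · right; rw [h]; push_cast; ring

end CStarAlgebra

end IsIdempotentElem

/-- For orthogonal projections `P, Q` on a complex Hilbert space,
`{λ ± √λ : λ ∈ σ(PQP) \ {0,1}} ⊆ σ(PQ + QP) ⊆ {λ ± √λ : λ ∈ σ(PQP)} ∪ {0, 2}`. -/
theorem spectrum_anticommutator_subsets
    {H : Type*} [NormedAddCommGroup H] [InnerProductSpace ℂ H] [CompleteSpace H]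
    (P Q : H →L[ℂ] H) (hP : IsSelfAdjoint P) (hP2 : P * P = P)
    (hQ : IsSelfAdjoint Q) (hQ2 : Q * Q = Q) :
    {z : ℂ | ∃ l : ℝ, (l : ℂ) ∈ spectrum ℂ (P * Q * P) ∧ l ≠ 0 ∧ l ≠ 1 ∧
        (z = ((l + Real.sqrt l : ℝ) : ℂ) ∨ z = ((l - Real.sqrt l : ℝ) : ℂ))}
      ⊆ spectrum ℂ (P * Q + Q * P) ∧
    spectrum ℂ (P * Q + Q * P) ⊆
      {z : ℂ | ∃ l : ℝ, (l : ℂ) ∈ spectrum ℂ (P * Q * P) ∧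
        (z = ((l + Real.sqrt l : ℝ) : ℂ) ∨ z = ((l - Real.sqrt l : ℝ) : ℂ))}
        ∪ {0, 2} := by
  have hp : IsIdempotentElem P := hP2
  have hq : IsIdempotentElem Q := hQ2
  have hPQ : IsSelfAdjoint (P + Q) := hP.add hQ
  refine ⟨?_, fun z hz ↦ ?_⟩
  · rintro z ⟨l, hl, hl0, hl1, hz⟩
    obtain ⟨hplus, hminus⟩ := hp.ofReal_add_sqrt_mem_spectrum_mul_add_mul hq hPQ hl hl0 hl1
    rcases hz with rfl | rfl
    exacts [hplus, hminus]
  · by_cases hz02 : z = 0 ∨ z = 2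
    · exact .inr hz02
    · rw [not_or] at hz02
      exact .inl (hp.exists_add_sqrt_eq_of_mem_spectrum_mul_add_mul hq hPQ hz hz02.1 hz02.2)
end

section
/- Let P and Q be orthogonal projections on a complex Hilbert space H. If λ ∈ σ(PQP) with λ ≠ 0 and λ ≠ 1, then both λ + √λ ∈ σ(PQ + QP) and λ − √λ ∈ σ(PQ + QP). -/
set_option synthInstance.maxHeartbeats 400000
set_option maxHeartbeats 1000000

/-- If `a` and `b` commute and `a * b` is a unit, then `a` is a unit. -/
lemma aux_commute_isUnit_left {A : Type*} [Ring A] {a b : A} (h : a * b = b * a)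
    (hab : IsUnit (a * b)) : IsUnit a := by
  obtain ⟨u, hu⟩ := hab
  have hc : Commute a ↑u := by
    show a * ↑u = ↑u * a
    rw [hu, mul_assoc, ← h]
  have hc' := hc.units_inv_right
  exact ⟨⟨a, b * ↑u⁻¹, by rw [← mul_assoc, ← hu, u.mul_inv],
    by rw [mul_assoc, ← hc'.eq, ← mul_assoc, ← h, ← hu, u.mul_inv]⟩, rfl⟩

/-- Key step: with `R'` anticommuting with `R` and `R'^2 = 1 - R^2`, if `R - μ` is a unit
and `μ^2 = l ≠ 1`, then `R + μ` is a unit. -/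
lemma aux_key_step {A : Type*} [Ring A] [Algebra ℂ A] {R R' : A} {μ l : ℂ}
    (hR'2 : R' * R' = 1 - R * R) (hanti : R * R' = -(R' * R))
    (hμ : μ * μ = l) (hl1 : l ≠ 1)
    (h : IsUnit (R - μ • 1)) : IsUnit (R + μ • 1) := by
  subst hμ
  obtain ⟨u, hu⟩ := h
  have hv1 : (R - μ • 1) * (↑u⁻¹ : A) = 1 := by rw [← hu]; exact u.mul_inv
  have hv2 : (↑u⁻¹ : A) * (R - μ • 1) = 1 := by rw [← hu]; exact u.inv_mul
  have hc : (1 - μ * μ) ≠ 0 := sub_ne_zero.mpr (Ne.symm hl1)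
  have h1 : (R + μ • 1) * R' = -(R' * (R - μ • 1)) := by
    simp only [add_mul, mul_sub, smul_mul_assoc, mul_smul_comm, one_mul, mul_one, hanti]
    module
  have h1' : R' * (R + μ • 1) = -((R - μ • 1) * R') := by
    simp only [mul_add, sub_mul, smul_mul_assoc, mul_smul_comm, one_mul, mul_one, hanti]
    module
  have ht1 : (R + μ • 1) * (R - μ • 1) = R * R - (μ * μ) • 1 := by
    simp only [mul_add, add_mul, sub_mul, mul_sub, smul_mul_assoc, mul_smul_comm,
      one_mul, mul_one, smul_smul]
    module
  have ht1' : (R - μ • 1) * (R + μ • 1) = R * R - (μ * μ) • 1 := by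
    simp only [mul_add, add_mul, sub_mul, mul_sub, smul_mul_assoc, mul_smul_comm,
      one_mul, mul_one, smul_smul]
    module
  have ht2 : (R + μ • 1) * (R' * (↑u⁻¹ : A) * R') = -(1 - R * R) := by
    calc (R + μ • 1) * (R' * (↑u⁻¹ : A) * R')
        = ((R + μ • 1) * R') * ((↑u⁻¹ : A) * R') := by noncomm_ring
      _ = -(R' * ((R - μ • 1) * (↑u⁻¹ : A)) * R') := by rw [h1]; noncomm_ring
      _ = -(1 - R * R) := by rw [hv1, mul_one, hR'2]
  have ht2' : (R' * (↑u⁻¹ : A) * R') * (R + μ • 1) = -(1 - R * R) := by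
    calc (R' * (↑u⁻¹ : A) * R') * (R + μ • 1)
        = (R' * (↑u⁻¹ : A)) * (R' * (R + μ • 1)) := by noncomm_ring
      _ = -(R' * ((↑u⁻¹ : A) * (R - μ • 1)) * R') := by rw [h1']; noncomm_ring
      _ = -(1 - R * R) := by rw [hv2, mul_one, hR'2]
  have harith : R * R - (μ * μ) • 1 - -(1 - R * R) = (1 - μ * μ) • 1 := by module
  refine ⟨⟨R + μ • 1, (1 - μ * μ)⁻¹ • ((R - μ • 1) - R' * (↑u⁻¹ : A) * R'), ?_, ?_⟩, rfl⟩
  · rw [mul_smul_comm, mul_sub, ht1, ht2, harith, smul_smul, inv_mul_cancel₀ hc, one_smul]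
  · rw [smul_mul_assoc, sub_mul, ht1', ht2', harith, smul_smul, inv_mul_cancel₀ hc, one_smul]

/-- If `P` is idempotent commuting with `D` and `l•1 - D` is a unit with `l ≠ 0`,
then `l•1 - P*D` is a unit. -/
lemma aux_compress_unit {A : Type*} [Ring A] [Algebra ℂ A] {P D : A} (hP2 : P * P = P)
    (hPD : P * D = D * P) {l : ℂ} (hl0 : l ≠ 0) (h : IsUnit (l • 1 - D)) :
    IsUnit (l • (1 : A) - P * D) := by
  obtain ⟨u, hu⟩ := h
  have hv1 : (l • 1 - D) * (↑u⁻¹ : A) = 1 := by rw [← hu]; exact u.mul_inv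
  have hv2 : (↑u⁻¹ : A) * (l • 1 - D) = 1 := by rw [← hu]; exact u.inv_mul
  have hPc : P * (l • 1 - D) = (l • 1 - D) * P := by
    simp only [mul_sub, sub_mul, mul_smul_comm, smul_mul_assoc, mul_one, one_mul, hPD]
  have hcu : Commute P (↑u : A) := by show P * ↑u = ↑u * P; rw [hu]; exact hPc
  have hPv : P * (↑u⁻¹ : A) = (↑u⁻¹ : A) * P := hcu.units_inv_right.eq
  have hDPP : P * D * P = P * D := by rw [hPD, mul_assoc, hP2]
  have e1 : (l • 1 - P * D) * P = (l • 1 - D) * P := by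
    simp only [sub_mul, smul_mul_assoc, one_mul]
    rw [mul_assoc, ← hPD, ← mul_assoc, hP2]
  have t1 : (l • 1 - P * D) * ((↑u⁻¹ : A) * P) = P := by
    rw [← hPv, ← mul_assoc, e1, mul_assoc, hPv, ← mul_assoc, hv1, one_mul]
  have t2 : (l • 1 - P * D) * (1 - P) = l • (1 - P) := by
    simp only [mul_sub, sub_mul, mul_one, one_mul, smul_mul_assoc]
    rw [hDPP]
    module
  have e2 : P * (l • 1 - P * D) = (l • 1 - D) * P := by
    simp only [mul_sub, sub_mul, mul_smul_comm, smul_mul_assoc, mul_one, one_mul]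
    rw [← mul_assoc, hP2, hPD]
  have t1' : ((↑u⁻¹ : A) * P) * (l • 1 - P * D) = P := by
    rw [mul_assoc, e2, ← mul_assoc, hv2, one_mul]
  have t2' : (1 - P) * (l • 1 - P * D) = l • (1 - P) := by
    simp only [mul_sub, sub_mul, mul_one, one_mul, mul_smul_comm]
    rw [← mul_assoc, hP2]
    module
  refine ⟨⟨l • 1 - P * D, (↑u⁻¹ : A) * P + l⁻¹ • (1 - P), ?_, ?_⟩, rfl⟩
  · rw [mul_add, t1, mul_smul_comm, t2, smul_smul, inv_mul_cancel₀ hl0, one_smul]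
    abel
  · rw [add_mul, t1', smul_mul_assoc, t2', smul_smul, inv_mul_cancel₀ hl0, one_smul]
    abel

/-- For orthogonal projections `P, Q`, if `λ ∈ σ(PQP)`, `λ ≠ 0`, `λ ≠ 1`,
then `λ + √λ ∈ σ(PQ + QP)` and `λ - √λ ∈ σ(PQ + QP)`. -/
theorem mem_spectrum_anticommutator
    {H : Type*} [NormedAddCommGroup H] [InnerProductSpace ℂ H] [CompleteSpace H]
    (P Q : H →L[ℂ] H) (hP : IsSelfAdjoint P) (hP2 : P * P = P)
    (hQ : IsSelfAdjoint Q) (hQ2 : Q * Q = Q)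
    (l : ℝ) (hl : (l : ℂ) ∈ spectrum ℂ (P * Q * P)) (hl0 : l ≠ 0) (hl1 : l ≠ 1) :
    ((l + Real.sqrt l : ℝ) : ℂ) ∈ spectrum ℂ (P * Q + Q * P) ∧
    ((l - Real.sqrt l : ℝ) : ℂ) ∈ spectrum ℂ (P * Q + Q * P) := by
  have hsm : ∀ (z : ℂ) (a : H →L[ℂ] H), z ∈ spectrum ℂ a ↔ ¬ IsUnit (z • 1 - a) := by
    intro z a
    rw [spectrum.mem_iff, Algebra.algebraMap_eq_smul_one]
  set R : H →L[ℂ] H := P + Q - 1 with hR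
  set R' : H →L[ℂ] H := P - Q with hR'
  have hanti : R * R' = -(R' * R) := by
    rw [hR, hR']; linear_combination (norm := noncomm_ring) 2*hP2 - 2*hQ2
  have hR'2 : R' * R' = 1 - R * R := by
    rw [hR, hR']; linear_combination (norm := noncomm_ring) 2*hP2 + 2*hQ2
  have hPD : P * (R * R) = P * Q * P := by
    rw [hR]; linear_combination (norm := noncomm_ring) P*hP2 + hP2*Q + P*hQ2 - hP2
  have hDP : (R * R) * P = P * Q * P := by
    rw [hR]; linear_combination (norm := noncomm_ring) hP2*P + Q*hP2 + hQ2*P - hP2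
  have hA : P * Q + Q * P = R * R + R := by
    rw [hR]; linear_combination (norm := noncomm_ring) -hP2 - hQ2
  have hl0' : (l : ℂ) ≠ 0 := by exact_mod_cast hl0
  have hl1' : (l : ℂ) ≠ 1 := by exact_mod_cast hl1
  -- l is in the spectrum of D = R * R
  have hlPQP : ¬ IsUnit ((l : ℂ) • (1 : H →L[ℂ] H) - P * Q * P) := (hsm _ _).mp hl
  have hlD : ¬ IsUnit ((l : ℂ) • (1 : H →L[ℂ] H) - R * R) := by
    intro hu
    have := aux_compress_unit hP2 (hPD.trans hDP.symm) hl0' hu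
    rw [hPD] at this
    exact hlPQP this
  -- l is nonnegative
  have hRsa : IsSelfAdjoint R := by
    rw [hR]; exact (hP.add hQ).sub (IsSelfAdjoint.one _)
  have hl_realmem : l ∈ spectrum ℝ (R * R) := by
    apply spectrum.of_algebraMap_mem ℂ
    show algebraMap ℝ ℂ l ∈ spectrum ℂ (R * R)
    rw [Complex.coe_algebraMap]
    exact (hsm _ _).mpr hlD
  have hl_nonneg : (0 : ℝ) ≤ l := by
    apply spectrum_star_mul_self_nonneg (b := R) l
    rwa [hRsa.star_eq]
  set μ : ℝ := Real.sqrt l with hμdef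
  have hμ2 : (μ : ℂ) * (μ : ℂ) = (l : ℂ) := by
    rw [← Complex.ofReal_mul, Real.mul_self_sqrt hl_nonneg]
  have hμ2' : (-(μ : ℂ)) * (-(μ : ℂ)) = (l : ℂ) := by rw [neg_mul_neg, hμ2]
  have hprod : (R - (μ : ℂ) • 1) * (R + (μ : ℂ) • 1) = -((l : ℂ) • 1 - R * R) := by
    rw [← hμ2]
    simp only [mul_add, add_mul, sub_mul, mul_sub, smul_mul_assoc, mul_smul_comm,
      one_mul, mul_one, smul_smul]
    module
  have hnot1 : ¬ IsUnit (R - (μ : ℂ) • 1) := by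
    intro h
    have h2 := aux_key_step hR'2 hanti hμ2 hl1' h
    have h3 := h.mul h2
    rw [hprod] at h3
    exact hlD ((IsUnit.neg_iff _).mp h3)
  have hnot2 : ¬ IsUnit (R + (μ : ℂ) • 1) := by
    intro h
    have h' : IsUnit (R - (-(μ : ℂ)) • 1) := by
      rw [neg_smul, sub_neg_eq_add]; exact h
    have h2 := aux_key_step hR'2 hanti hμ2' hl1' h'
    rw [neg_smul, ← sub_eq_add_neg] at h2
    exact hnot1 h2
  constructor
  · rw [hsm]
    intro hu
    have hcast : ((l + Real.sqrt l : ℝ) : ℂ) = (l : ℂ) + (μ : ℂ) := by push_cast; rfl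
    rw [hcast, hA] at hu
    have hfac : ((l : ℂ) + (μ : ℂ)) • (1 : H →L[ℂ] H) - (R * R + R)
        = -((R - (μ : ℂ) • 1) * (R + (μ : ℂ) • 1 + 1)) := by
      rw [← hμ2]
      simp only [mul_add, add_mul, sub_mul, mul_sub, smul_mul_assoc, mul_smul_comm,
        one_mul, mul_one, smul_smul, add_smul]
      module
    have hcomm : (R - (μ : ℂ) • 1) * (R + (μ : ℂ) • 1 + 1)
        = (R + (μ : ℂ) • 1 + 1) * (R - (μ : ℂ) • 1) := by
      simp only [mul_add, add_mul, sub_mul, mul_sub, smul_mul_assoc, mul_smul_comm,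
        one_mul, mul_one, smul_smul]
      module
    rw [hfac] at hu
    exact hnot1 (aux_commute_isUnit_left hcomm ((IsUnit.neg_iff _).mp hu))
  · rw [hsm]
    intro hu
    have hcast : ((l - Real.sqrt l : ℝ) : ℂ) = (l : ℂ) - (μ : ℂ) := by push_cast; rfl
    rw [hcast, hA] at hu
    have hfac : ((l : ℂ) - (μ : ℂ)) • (1 : H →L[ℂ] H) - (R * R + R)
        = -((R + (μ : ℂ) • 1) * (R - (μ : ℂ) • 1 + 1)) := by
      rw [← hμ2]
      simp only [mul_add, add_mul, sub_mul, mul_sub, smul_mul_assoc, mul_smul_comm,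
        one_mul, mul_one, smul_smul, sub_smul]
      module
    have hcomm : (R + (μ : ℂ) • 1) * (R - (μ : ℂ) • 1 + 1)
        = (R - (μ : ℂ) • 1 + 1) * (R + (μ : ℂ) • 1) := by
      simp only [mul_add, add_mul, sub_mul, mul_sub, smul_mul_assoc, mul_smul_comm,
        one_mul, mul_one, smul_smul]
      module
    rw [hfac] at hu
    exact hnot2 (aux_commute_isUnit_left hcomm ((IsUnit.neg_iff _).mp hu))
end

section
/- Let P and Q be orthogonal projections on a complex Hilbert space H. Then ‖PQ + QP‖ = ‖PQ‖² + ‖PQ‖. -/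
/-!
Write `S = PQ + QP` and `t = ‖QP‖`, and use `re ⟪S x, x⟫ = 2 re ⟪P x, Q x⟫`.

Upper bound: `S` is self-adjoint, so it suffices to bound its quadratic form. With `a = P x`,
`b = (1 - P) x` and `u = Q a` one finds `re ⟪S x, x⟫ = 2 (‖u‖² + re ⟪(1 - P) u, b⟫)`, where
`‖u‖ ≤ t ‖a‖` and `‖u‖² = re ⟪a, P u⟫ ≤ ‖a‖ ‖P u‖` forces `(1 - P) u` to be short. Writing
`‖u‖ = m ‖a‖`, the resulting bound `2 m² ‖a‖² + 2 m √(1 - m²) ‖a‖ ‖b‖` is at most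
`(m² + m) ‖x‖²` by Cauchy–Schwarz in `ℝ²`.

Lower bound: with `y = Q P x`, `r = ‖y‖` and `σ = ‖x‖`, the test vector `v = r P x + σ y`
satisfies `σ² re ⟪S v, v⟫ ≥ (r² + r σ) ‖v‖²`, hence `‖Q P x‖ ≤ τ ‖x‖` for the root `τ ≥ 0` of
`τ² + τ = ‖S‖`, i.e. `t ≤ τ`.
-/

open scoped InnerProductSpace
open RCLike

theorem two_mul_sq_add_two_mul_le {t α β s p w : ℝ} (ht : 0 ≤ t) (hα : 0 ≤ α) (hs : 0 ≤ s)
    (hp : 0 ≤ p) (hw : 0 ≤ w) (hst : s ≤ t * α) (hspw : p ^ 2 + w ^ 2 = s ^ 2)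
    (hsp : s ^ 2 ≤ α * p) :
    2 * s ^ 2 + 2 * w * β ≤ (t ^ 2 + t) * (α ^ 2 + β ^ 2) := by
  rcases hα.eq_or_lt with rfl | hα
  · obtain rfl : s = 0 := by nlinarith
    obtain rfl : w = 0 := by nlinarith
    nlinarith [sq_nonneg β]
  have hps : p ≤ s := by nlinarith
  have hsα : s ≤ α := by nlinarith [mul_le_mul_of_nonneg_left hps hα.le]
  have hwα : α ^ 2 * w ^ 2 ≤ s ^ 2 * (α ^ 2 - s ^ 2) := by
    nlinarith [mul_le_mul hsp hsp (sq_nonneg s) (by positivity)]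
  -- Cauchy–Schwarz for `(s, √(α² - s²))` and `(β² - α², 2αβ)`, squared
  have hsq : (2 * α * β * (α * w)) ^ 2 ≤ (s * (s * (β ^ 2 - α ^ 2) + α * (α ^ 2 + β ^ 2))) ^ 2 := by
    nlinarith [sq_nonneg (α * (α ^ 2 - β ^ 2) - s * (α ^ 2 + β ^ 2)), sq_nonneg (α * β),
      mul_nonneg hs hs]
  have hR : 0 ≤ s * (β ^ 2 - α ^ 2) + α * (α ^ 2 + β ^ 2) := by nlinarith
  have hcs := (abs_le_of_sq_le_sq' hsq (by positivity)).2
  have hmono : s ^ 2 + s * α ≤ α ^ 2 * (t ^ 2 + t) := by nlinarith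
  refine le_of_mul_le_mul_left ?_ (by positivity : 0 < α ^ 2)
  nlinarith [sq_nonneg α, sq_nonneg β]

theorem sq_add_mul_le_of_mul_le {M r σ p : ℝ} (hM : 0 ≤ M) (hr : 0 ≤ r) (hσ : 0 ≤ σ)
    (hrp : r ^ 2 ≤ σ * p) (h : (r + σ) * (r ^ 3 + σ * p ^ 2) ≤ M * (r ^ 2 * σ ^ 2 + r ^ 3 * σ)) :
    r ^ 2 + r * σ ≤ M * σ ^ 2 := by
  rcases hr.eq_or_lt with rfl | hr
  · nlinarith [mul_nonneg hM (sq_nonneg σ)]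
  have h' : r ^ 2 * (r + σ) * (r * (r + σ)) ≤ r ^ 2 * (r + σ) * (M * σ ^ 2) := by
    nlinarith [mul_le_mul_of_nonneg_left h hσ, pow_le_pow_left₀ (sq_nonneg r) hrp 2]
  linarith [le_of_mul_le_mul_left h' (by positivity)]

section

variable {𝕜 E : Type*} [RCLike 𝕜] [NormedAddCommGroup E] [InnerProductSpace 𝕜 E]

namespace ContinuousLinearMap

theorem norm_le_of_abs_re_inner_le {T : E →L[𝕜] E} (hT : (T : E →ₗ[𝕜] E).IsSymmetric) {C : ℝ}
    (hC : 0 ≤ C) (h : ∀ x, |re ⟪T x, x⟫_𝕜| ≤ C * ‖x‖ ^ 2) : ‖T‖ ≤ C := by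
  rw [T.norm_eq_iSup_rayleighQuotient hT]
  refine ciSup_le fun x => ?_
  rcases eq_or_ne x 0 with rfl | hx
  · simpa using hC
  rw [rayleighQuotient, reApplyInnerSelf_apply, abs_div, abs_sq, div_le_iff₀ (by positivity)]
  exact h x

theorem re_inner_apply_self_le (T : E →L[𝕜] E) (x : E) : re ⟪T x, x⟫_𝕜 ≤ ‖T‖ * ‖x‖ ^ 2 :=
  calc re ⟪T x, x⟫_𝕜 ≤ ‖T x‖ * ‖x‖ := re_inner_le_norm _ _
    _ ≤ ‖T‖ * ‖x‖ * ‖x‖ := by gcongr; exact T.le_opNorm x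
    _ = ‖T‖ * ‖x‖ ^ 2 := by ring

theorem sq_add_le_of_forall_norm_apply {T : E →L[𝕜] E} {M : ℝ} (hM : 0 ≤ M)
    (h : ∀ x, ‖T x‖ ^ 2 + ‖T x‖ * ‖x‖ ≤ M * ‖x‖ ^ 2) : ‖T‖ ^ 2 + ‖T‖ ≤ M := by
  set τ := (√(1 + 4 * M) - 1) / 2 with hτ
  have hsqrt : √(1 + 4 * M) ^ 2 = 1 + 4 * M := Real.sq_sqrt (by positivity)
  have hτ0 : 0 ≤ τ := by
    have : 1 ≤ √(1 + 4 * M) := Real.one_le_sqrt.mpr (by linarith)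
    rw [hτ]; linarith
  have hτM : τ ^ 2 + τ = M := by rw [hτ]; nlinarith
  have hT : ‖T‖ ≤ τ := T.opNorm_le_bound hτ0 fun x => by
    nlinarith [h x, norm_nonneg (T x), norm_nonneg x, mul_nonneg hτ0 (norm_nonneg x)]
  rw [← hτM]
  gcongr

end ContinuousLinearMap

theorem LinearMap.IsSymmetric.re_inner_anticommutator_apply_self {P Q : E →L[𝕜] E}
    (hP : (P : E →ₗ[𝕜] E).IsSymmetric) (hQ : (Q : E →ₗ[𝕜] E).IsSymmetric) (x : E) :
    re ⟪(P * Q + Q * P) x, x⟫_𝕜 = 2 * re ⟪P x, Q x⟫_𝕜 := by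
  have h₁ : ⟪P (Q x), x⟫_𝕜 = ⟪Q x, P x⟫_𝕜 := hP (Q x) x
  have h₂ : ⟪Q (P x), x⟫_𝕜 = ⟪P x, Q x⟫_𝕜 := hQ (P x) x
  rw [_root_.add_apply, mul_apply_eq_comp, mul_apply_eq_comp, inner_add_left, map_add, h₁, h₂,
    inner_re_symm (Q x)]
  ring

variable [CompleteSpace E] {P Q : E →L[𝕜] E}

theorem IsSelfAdjoint.inner_apply_left (hP : IsSelfAdjoint P) (x y : E) :
    ⟪P x, y⟫_𝕜 = ⟪x, P y⟫_𝕜 :=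
  hP.isSymmetric x y

namespace IsStarProjection

theorem apply_apply (hP : IsStarProjection P) (x : E) : P (P x) = P x := by
  rw [← mul_apply_eq_comp, hP.isIdempotentElem.eq]

theorem inner_apply_apply (hP : IsStarProjection P) (x y : E) :
    ⟪P x, P y⟫_𝕜 = ⟪x, P y⟫_𝕜 := by
  rw [hP.isSelfAdjoint.inner_apply_left, hP.apply_apply]

theorem norm_sq_apply_add_norm_sq_one_sub_apply (hP : IsStarProjection P) (x : E) :
    ‖P x‖ ^ 2 + ‖(1 - P) x‖ ^ 2 = ‖x‖ ^ 2 := by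
  have horth : ⟪P x, (1 - P) x⟫_𝕜 = 0 := by
    rw [hP.isSelfAdjoint.inner_apply_left, ← mul_apply_eq_comp, hP.mul_one_sub_self,
      zero_apply, inner_zero_right]
  have h := norm_add_sq_eq_norm_sq_add_norm_sq_of_inner_eq_zero (P x) ((1 - P) x) horth
  rw [← add_apply, add_sub_cancel, one_apply_eq_self] at h
  nlinarith [h]

theorem norm_apply_le (hP : IsStarProjection P) (x : E) : ‖P x‖ ≤ ‖x‖ :=
  (P.le_opNorm x).trans (mul_le_of_le_one_left (norm_nonneg x) (hP.norm_le P))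

theorem norm_sq_apply_le (hP : IsStarProjection P) (hQ : IsStarProjection Q) {a : E}
    (ha : P a = a) : ‖Q a‖ ^ 2 ≤ ‖a‖ * ‖P (Q a)‖ :=
  calc ‖Q a‖ ^ 2 = re ⟪Q a, Q a⟫_𝕜 := (inner_self_eq_norm_sq _).symm
    _ = re ⟪a, P (Q a)⟫_𝕜 := by
      rw [hQ.inner_apply_apply, ← hP.isSelfAdjoint.inner_apply_left, ha]
    _ ≤ ‖a‖ * ‖P (Q a)‖ := re_inner_le_norm _ _

end IsStarProjection

variable (hP : IsStarProjection P) (hQ : IsStarProjection Q)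
include hP hQ

theorem abs_re_inner_anticommutator_apply_self_le (x : E) :
    |re ⟪(P * Q + Q * P) x, x⟫_𝕜| ≤ (‖Q * P‖ ^ 2 + ‖Q * P‖) * ‖x‖ ^ 2 := by
  set a := P x
  set b := (1 - P) x
  set u := Q a
  have ha : P a = a := hP.apply_apply x
  have hre : re ⟪(P * Q + Q * P) x, x⟫_𝕜 = 2 * (‖u‖ ^ 2 + re ⟪(1 - P) u, b⟫_𝕜) := by
    have hx : x = a + b := by simp [a, b]
    have hua : re ⟪u, a⟫_𝕜 = ‖u‖ ^ 2 := by
      rw [inner_re_symm, ← hQ.inner_apply_apply, inner_self_eq_norm_sq]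
    rw [hP.isSelfAdjoint.isSymmetric.re_inner_anticommutator_apply_self
      hQ.isSelfAdjoint.isSymmetric, ← hQ.isSelfAdjoint.inner_apply_left,
      hP.one_sub.inner_apply_apply]
    nth_rewrite 2 [hx]
    rw [inner_add_right, map_add, hua]
  have hbound : |re ⟪(P * Q + Q * P) x, x⟫_𝕜| ≤ 2 * ‖u‖ ^ 2 + 2 * ‖(1 - P) u‖ * ‖b‖ := by
    have hcs := abs_le.mp ((abs_re_le_norm ⟪(1 - P) u, b⟫_𝕜).trans (norm_inner_le_norm _ _))
    rw [hre, abs_le]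
    constructor <;> nlinarith [sq_nonneg ‖u‖]
  have hu : ‖u‖ ≤ ‖Q * P‖ * ‖a‖ := by
    simpa only [mul_apply_eq_comp, ha] using (Q * P).le_opNorm a
  refine hbound.trans ?_
  rw [← hP.norm_sq_apply_add_norm_sq_one_sub_apply x]
  exact two_mul_sq_add_two_mul_le (norm_nonneg _) (norm_nonneg _) (norm_nonneg _)
    (norm_nonneg _) (norm_nonneg _) hu (hP.norm_sq_apply_add_norm_sq_one_sub_apply u)
    (hP.norm_sq_apply_le hQ ha)

theorem norm_anticommutator_le : ‖P * Q + Q * P‖ ≤ ‖Q * P‖ ^ 2 + ‖Q * P‖ := by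
  have hS : IsSelfAdjoint (P * Q + Q * P) := by
    simpa only [star_mul, hP.isSelfAdjoint.star_eq, hQ.isSelfAdjoint.star_eq]
      using IsSelfAdjoint.add_star_self (P * Q)
  exact ContinuousLinearMap.norm_le_of_abs_re_inner_le hS.isSymmetric (by positivity)
    (abs_re_inner_anticommutator_apply_self_le hP hQ)

theorem norm_sq_add_norm_mul_le_norm_anticommutator_mul (x : E) :
    ‖Q (P x)‖ ^ 2 + ‖Q (P x)‖ * ‖x‖ ≤ ‖P * Q + Q * P‖ * ‖x‖ ^ 2 := by
  set a := P x
  set y := Q a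
  set r := ‖y‖
  set σ := ‖x‖
  set v := (r : 𝕜) • a + (σ : 𝕜) • y
  have ha : P a = a := hP.apply_apply x
  have hay : re ⟪a, y⟫_𝕜 = r ^ 2 := by
    rw [← hQ.inner_apply_apply, inner_self_eq_norm_sq]
  have hyy : re ⟪P y, y⟫_𝕜 = ‖P y‖ ^ 2 := by
    rw [inner_re_symm, ← hP.inner_apply_apply, inner_self_eq_norm_sq]
  have hPv : P v = (r : 𝕜) • a + (σ : 𝕜) • P y := by simp [v, ha]
  have hQv : Q v = ((r + σ : ℝ) : 𝕜) • y := by simp [v, y, hQ.apply_apply, add_smul]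
  have hform : re ⟪(P * Q + Q * P) v, v⟫_𝕜 = 2 * ((r + σ) * (r ^ 3 + σ * ‖P y‖ ^ 2)) := by
    rw [hP.isSelfAdjoint.isSymmetric.re_inner_anticommutator_apply_self
      hQ.isSelfAdjoint.isSymmetric, hPv, hQv, inner_smul_right, re_ofReal_mul, inner_add_left,
      inner_smul_left, inner_smul_left, conj_ofReal, conj_ofReal, map_add, re_ofReal_mul,
      re_ofReal_mul, hay, hyy]
    ring
  have hv : ‖v‖ ^ 2 = r ^ 2 * ‖a‖ ^ 2 + 2 * r ^ 3 * σ + σ ^ 2 * r ^ 2 := by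
    rw [norm_add_sq (𝕜 := 𝕜), inner_smul_left, inner_smul_right, conj_ofReal, ← mul_assoc,
      ← ofReal_mul, re_ofReal_mul, norm_smul, norm_smul, norm_ofReal, norm_ofReal,
      abs_of_nonneg (norm_nonneg _), abs_of_nonneg (norm_nonneg x), hay]
    ring
  have haσ : ‖a‖ ≤ σ := hP.norm_apply_le x
  have hv_le : ‖v‖ ^ 2 ≤ 2 * (r ^ 2 * σ ^ 2 + r ^ 3 * σ) := by
    rw [hv]
    nlinarith [mul_le_mul haσ haσ (norm_nonneg _) (norm_nonneg _), sq_nonneg r]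
  have hle := (P * Q + Q * P).re_inner_apply_self_le v
  rw [hform] at hle
  refine sq_add_mul_le_of_mul_le (norm_nonneg _) (norm_nonneg _) (norm_nonneg _)
    ((hP.norm_sq_apply_le hQ ha).trans (by gcongr)) ?_
  nlinarith [mul_le_mul_of_nonneg_left hv_le (norm_nonneg (P * Q + Q * P))]

theorem le_norm_anticommutator : ‖Q * P‖ ^ 2 + ‖Q * P‖ ≤ ‖P * Q + Q * P‖ :=
  ContinuousLinearMap.sq_add_le_of_forall_norm_apply (norm_nonneg _) fun x => by
    simpa only [mul_apply_eq_comp] using norm_sq_add_norm_mul_le_norm_anticommutator_mul hP hQ x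

end

/-- For orthogonal projections `P, Q` on a complex Hilbert space,
`‖PQ + QP‖ = ‖PQ‖² + ‖PQ‖`. -/
theorem norm_anticommutator_eq
    {H : Type*} [NormedAddCommGroup H] [InnerProductSpace ℂ H] [CompleteSpace H]
    (P Q : H →L[ℂ] H) (hP : IsSelfAdjoint P) (hP2 : P * P = P)
    (hQ : IsSelfAdjoint Q) (hQ2 : Q * Q = Q) :
    ‖P * Q + Q * P‖ = ‖P * Q‖ ^ 2 + ‖P * Q‖ := by
  have hP' : IsStarProjection P := ⟨hP2, hP⟩
  have hQ' : IsStarProjection Q := ⟨hQ2, hQ⟩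
  rw [add_comm]
  exact (norm_anticommutator_le hQ' hP').antisymm (le_norm_anticommutator hQ' hP')
end

section
/- Let P and Q be orthogonal projections on a complex Hilbert space H. Then σ(PQ + QP) ⊆ [−1/4, 2]. -/
set_option synthInstance.maxHeartbeats 400000
set_option maxHeartbeats 1000000

/-- For orthogonal projections `P, Q` on a complex Hilbert space,
`σ(PQ + QP) ⊆ [-1/4, 2]`. -/
theorem spectrum_anticommutator_subset_Icc
    {H : Type*} [NormedAddCommGroup H] [InnerProductSpace ℂ H] [CompleteSpace H]
    (P Q : H →L[ℂ] H) (hP : IsSelfAdjoint P) (hP2 : P * P = P)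
    (hQ : IsSelfAdjoint Q) (hQ2 : Q * Q = Q) :
    spectrum ℂ (P * Q + Q * P) ⊆ Complex.ofReal '' Set.Icc (-(1/4) : ℝ) 2 := by
  set T : H →L[ℂ] H := P + Q with hT
  have hTsa : IsSelfAdjoint T := hP.add hQ
  have hPnn : (0 : H →L[ℂ] H) ≤ P := by
    simpa [hP.star_eq, hP2] using star_mul_self_nonneg P
  have hQnn : (0 : H →L[ℂ] H) ≤ Q := by
    simpa [hQ.star_eq, hQ2] using star_mul_self_nonneg Q
  have hTnn : (0 : H →L[ℂ] H) ≤ T := add_nonneg hPnn hQnn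
  -- norm bounds
  have h1P : (1 - P) * (1 - P) = 1 - P := by
    simp [sub_mul, mul_sub, hP2]
  have h1Q : (1 - Q) * (1 - Q) = 1 - Q := by
    simp [sub_mul, mul_sub, hQ2]
  have hPle : P ≤ 1 := by
    have := star_mul_self_nonneg (1 - P)
    rw [star_sub, star_one, hP.star_eq, h1P] at this
    exact sub_nonneg.mp this
  have hQle : Q ≤ 1 := by
    have := star_mul_self_nonneg (1 - Q)
    rw [star_sub, star_one, hQ.star_eq, h1Q] at this
    exact sub_nonneg.mp this
  have hPnorm : ‖P‖ ≤ 1 := (CStarAlgebra.norm_le_one_iff_of_nonneg P hPnn).mpr hPle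
  have hQnorm : ‖Q‖ ≤ 1 := (CStarAlgebra.norm_le_one_iff_of_nonneg Q hQnn).mpr hQle
  have hTnorm : ‖T‖ ≤ 2 := by
    calc ‖T‖ ≤ ‖P‖ + ‖Q‖ := norm_add_le P Q
    _ ≤ 2 := by linarith
  -- express as polynomial in T
  have haeval : P * Q + Q * P = Polynomial.aeval T (Polynomial.X ^ 2 - Polynomial.X : Polynomial ℂ) := by
    simp only [map_sub, map_pow, Polynomial.aeval_X]
    rw [hT, sq, add_mul, mul_add, mul_add, hP2, hQ2]
    abel
  have hdeg : 0 < (Polynomial.X ^ 2 - Polynomial.X : Polynomial ℂ).degree := by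
    have h2 : (Polynomial.X ^ 2 - Polynomial.X : Polynomial ℂ).degree = 2 := by
      compute_degree!
    rw [h2]; norm_num
  have hmap := spectrum.map_polynomial_aeval_of_degree_pos T
    (Polynomial.X ^ 2 - Polynomial.X) hdeg
  rw [haeval, hmap]
  rintro z ⟨k, hk, rfl⟩
  obtain ⟨t, ht, rfl⟩ := hTsa.spectrumRestricts.algebraMap_image.symm ▸ hk
  have ht0 : (0 : ℝ) ≤ t := spectrum_nonneg_of_nonneg hTnn ht
  have ht2 : t ≤ 2 := by
    have h1 := spectrum.norm_le_norm_mul_of_mem ht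
    have hid : ‖(1 : H →L[ℂ] H)‖ ≤ 1 := ContinuousLinearMap.norm_id_le
    rw [Real.norm_eq_abs] at h1
    have habs : |t| ≤ 2 := by
      calc |t| ≤ ‖T‖ * ‖(1 : H →L[ℂ] H)‖ := h1
      _ ≤ 2 * 1 := by
          apply mul_le_mul hTnorm hid (norm_nonneg _) (by linarith [norm_nonneg T])
      _ = 2 := by norm_num
    linarith [abs_le.mp habs |>.2]
  refine ⟨t ^ 2 - t, ⟨by nlinarith [sq_nonneg (t - 1/2)], by nlinarith [mul_nonneg ht0 (sub_nonneg.mpr ht2)]⟩, ?_⟩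
  push_cast
  simp [Polynomial.eval_sub, Polynomial.eval_pow]
end

section
/- Let P and Q be orthogonal projections on a complex Hilbert space H. Then, in the ordering of self-adjoint operators, −(1/4)·I ≤ PQ + QP ≤ 2·I; that is, PQ + QP + (1/4)·I and 2·I − (PQ + QP) are both positive operators. -/
/-!
Both bounds are sums of squares in any star-ordered algebra. For star projections `p, q`,
`pq + qp + ¼ = (p + q - ½)²` and `2 - (pq + qp) = (p - q)² + (1 - p) + (1 - q)`,
where `p + q - ½` and `p - q` are self-adjoint and `1 - p`, `1 - q` are again star projections.
For operators on a complex Hilbert space, nonnegativity in the star order is positivity.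
-/

section

variable {𝕜 A : Type*} [RCLike 𝕜] [Ring A] [Algebra 𝕜 A] {p q : A}

theorem IsIdempotentElem.anticommutator_add_quarter_eq_mul_self
    (hp : IsIdempotentElem p) (hq : IsIdempotentElem q) :
    p * q + q * p + (1 / 4 : 𝕜) • 1 =
      (p + q - (1 / 2 : 𝕜) • 1) * (p + q - (1 / 2 : 𝕜) • 1) := by
  simp only [add_mul, mul_add, sub_mul, mul_sub, smul_mul_assoc, mul_smul_comm, one_mul, mul_one,
    hp.eq, hq.eq]
  module

theorem IsIdempotentElem.two_sub_anticommutator_eq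
    (hp : IsIdempotentElem p) (hq : IsIdempotentElem q) :
    (2 : 𝕜) • 1 - (p * q + q * p) = (p - q) * (p - q) + (1 - p) + (1 - q) := by
  simp only [sub_mul, mul_sub, hp.eq, hq.eq]
  module

variable [StarRing A] [PartialOrder A] [StarOrderedRing A]

theorem IsStarProjection.anticommutator_add_quarter_nonneg [StarModule 𝕜 A]
    (hp : IsStarProjection p) (hq : IsStarProjection q) :
    0 ≤ p * q + q * p + (1 / 4 : 𝕜) • 1 := by
  rw [hp.isIdempotentElem.anticommutator_add_quarter_eq_mul_self hq.isIdempotentElem]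
  have hhalf : IsSelfAdjoint ((1 / 2 : 𝕜) • (1 : A)) :=
    .smul (by simp [IsSelfAdjoint]) (.one A)
  exact ((hp.isSelfAdjoint.add hq.isSelfAdjoint).sub hhalf).mul_self_nonneg

theorem IsStarProjection.two_sub_anticommutator_nonneg
    (hp : IsStarProjection p) (hq : IsStarProjection q) :
    0 ≤ (2 : 𝕜) • 1 - (p * q + q * p) := by
  rw [hp.isIdempotentElem.two_sub_anticommutator_eq (𝕜 := 𝕜) hq.isIdempotentElem]
  exact add_nonneg (add_nonneg (hp.isSelfAdjoint.sub hq.isSelfAdjoint).mul_self_nonneg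
    hp.one_sub.nonneg) hq.one_sub.nonneg

end

/-- For orthogonal projections `P, Q` on a complex Hilbert space,
`-(1/4)·I ≤ PQ + QP ≤ 2·I`: both `PQ + QP + (1/4)·I` and `2·I - (PQ + QP)` are
positive operators. -/
theorem anticommutator_order_bounds
    {H : Type*} [NormedAddCommGroup H] [InnerProductSpace ℂ H] [CompleteSpace H]
    (P Q : H →L[ℂ] H) (hP : IsSelfAdjoint P) (hP2 : P * P = P)
    (hQ : IsSelfAdjoint Q) (hQ2 : Q * Q = Q) :
    (P * Q + Q * P + (1/4 : ℂ) • 1).IsPositive ∧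
    ((2 : ℂ) • (1 : H →L[ℂ] H) - (P * Q + Q * P)).IsPositive := by
  have hPproj : IsStarProjection P := ⟨hP2, hP⟩
  have hQproj : IsStarProjection Q := ⟨hQ2, hQ⟩
  simp only [← ContinuousLinearMap.nonneg_iff_isPositive]
  exact ⟨hPproj.anticommutator_add_quarter_nonneg hQproj,
    hPproj.two_sub_anticommutator_nonneg hQproj⟩
end

section
/- Let P and Q be orthogonal projections on a complex Hilbert space H. Then ‖PQ + QP‖ = 2 if and only if ‖PQ‖ = 1. -/
/-!
Write `t = ‖PQ‖ ≤ 1`. Since `‖QP‖ = ‖(PQ)*‖ = t`, the triangle inequality gives `‖PQ + QP‖ ≤ 2t`.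
On the other hand, compressing by `Q` gives `Q(PQ + QP)Q = 2 QPQ = 2 (PQ)*(PQ)`, whose norm is `2t²` by the
C*-identity, so `2t² ≤ ‖PQ + QP‖` as `‖Q‖ ≤ 1`. Both implications follow from `2t² ≤ ‖PQ + QP‖ ≤ 2t`.
-/

theorem IsIdempotentElem.mul_anticommutator_mul {R : Type*} [NonUnitalSemiring R] {p q : R}
    (hq : IsIdempotentElem q) : q * (p * q + q * p) * q = q * p * q + q * p * q := by
  rw [mul_add, add_mul, ← mul_assoc, mul_assoc _ q q, hq.eq, ← mul_assoc q q, hq.eq]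

theorem IsSelfAdjoint.norm_mul_comm {E : Type*} [NonUnitalNormedRing E] [StarRing E]
    [NormedStarGroup E] {p q : E} (hp : IsSelfAdjoint p) (hq : IsSelfAdjoint q) :
    ‖q * p‖ = ‖p * q‖ := by
  rw [← norm_star (p * q), star_mul, hp.star_eq, hq.star_eq]

namespace IsStarProjection

variable {E : Type*} [NonUnitalNormedRing E] [StarRing E] [CStarRing E] {p q : E}

theorem norm_mul_le_one (hp : IsStarProjection p) (hq : IsStarProjection q) : ‖p * q‖ ≤ 1 :=
  (norm_mul_le p q).trans <| mul_le_one₀ hp.norm_le (norm_nonneg q) hq.norm_le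

theorem norm_mul_mul_self (hp : IsStarProjection p) (hq : IsStarProjection q) :
    ‖q * p * q‖ = ‖p * q‖ ^ 2 := by
  rw [sq, ← CStarRing.norm_star_mul_self]
  simp only [star_mul, hp.isSelfAdjoint.star_eq, hq.isSelfAdjoint.star_eq, mul_assoc,
    hp.isIdempotentElem.mul_self_mul]

theorem norm_anticommutator_le (hp : IsStarProjection p) (hq : IsStarProjection q) :
    ‖p * q + q * p‖ ≤ 2 * ‖p * q‖ :=
  (norm_add_le _ _).trans_eq <| by rw [hp.isSelfAdjoint.norm_mul_comm hq.isSelfAdjoint, two_mul]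

theorem two_mul_sq_norm_mul_le_norm_anticommutator [NormedSpace ℝ E]
    (hp : IsStarProjection p) (hq : IsStarProjection q) :
    2 * ‖p * q‖ ^ 2 ≤ ‖p * q + q * p‖ :=
  calc 2 * ‖p * q‖ ^ 2 = ‖q * (p * q + q * p) * q‖ := by
        rw [hq.isIdempotentElem.mul_anticommutator_mul, ← two_smul ℝ, norm_smul,
          hp.norm_mul_mul_self hq, Real.norm_two]
    _ ≤ ‖q‖ * ‖p * q + q * p‖ * ‖q‖ := norm_mul₃_le
    _ ≤ 1 * ‖p * q + q * p‖ * 1 := by gcongr <;> exact hq.norm_le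
    _ = ‖p * q + q * p‖ := by ring

theorem norm_anticommutator_eq_two_iff_norm_mul_eq_one [NormedSpace ℝ E]
    (hp : IsStarProjection p) (hq : IsStarProjection q) :
    ‖p * q + q * p‖ = 2 ↔ ‖p * q‖ = 1 := by
  have hle := hp.norm_mul_le_one hq
  have hlower := hp.two_mul_sq_norm_mul_le_norm_anticommutator hq
  have hupper := hp.norm_anticommutator_le hq
  constructor <;> intro h
  · rw [h] at hupper
    linarith
  · rw [h] at hlower hupper
    linarith

end IsStarProjection

/-- For orthogonal projections `P, Q` on a complex Hilbert space,
`‖PQ + QP‖ = 2 ↔ ‖PQ‖ = 1`. -/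
theorem norm_anticommutator_eq_two_iff
    {H : Type*} [NormedAddCommGroup H] [InnerProductSpace ℂ H] [CompleteSpace H]
    (P Q : H →L[ℂ] H) (hP : IsSelfAdjoint P) (hP2 : P * P = P)
    (hQ : IsSelfAdjoint Q) (hQ2 : Q * Q = Q) :
    ‖P * Q + Q * P‖ = 2 ↔ ‖P * Q‖ = 1 :=
  IsStarProjection.norm_anticommutator_eq_two_iff_norm_mul_eq_one ⟨hP2, hP⟩ ⟨hQ2, hQ⟩
end

section
/- Let K and K' be complex Hilbert spaces, let Q₀ be a positive contraction on K (Q₀ = Q₀*, 0 ≤ Q₀, ‖Q₀‖ ≤ 1), and let D : K' → K be a unitary operator. Define the bounded operator W on K × K' by W(x, y) = ( 2Q₀x + Q₀^{1/2}(I − Q₀)^{1/2} D y , D*( Q₀^{1/2}(I − Q₀)^{1/2} x ) ). Then σ(W) = σ(Q₀ + Q₀^{1/2}) ∪ σ(Q₀ − Q₀^{1/2}), i.e. σ(W) = { λ + √λ : λ ∈ σ(Q₀) } ∪ { λ − √λ : λ ∈ σ(Q₀) }. -/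
/-!
After identifying `K'` with `K` through `D`, `W` becomes the block operator whose entries are
the functions of `x ∈ [0, 1]` in `blockSymbol x = !![2x, √x √(1-x); √x √(1-x), 0]`, evaluated
at `Q₀` by the continuous functional calculus. This symbol is `x • 1 + √x • S` with the
reflection `S = !![cos 2θ, sin 2θ; sin 2θ, -cos 2θ]`, `cos 2θ = √x`, `sin 2θ = √(1 - x)`, so
the rotation by `θ` conjugates it to `diag(x + √x, x - √x)`. The functional calculus is
multiplicative on matrices of functions, hence the same rotation evaluated at `Q₀` conjugates
`W` to `(Q₀ + √Q₀) × (Q₀ - √Q₀)`, whose spectrum is the union of the spectra of its components.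
-/

open ContinuousLinearMap Matrix Real Set

namespace ContinuousLinearMap

variable {𝕜 E F : Type*} [NontriviallyNormedField 𝕜] [NormedAddCommGroup E] [NormedSpace 𝕜 E]
  [NormedAddCommGroup F] [NormedSpace 𝕜 F]

noncomputable def ofBlockMatrix : Matrix (Fin 2) (Fin 2) (E →L[𝕜] E) →+* (E × E →L[𝕜] E × E) where
  toFun M := ((M 0 0).coprod (M 0 1)).prod ((M 1 0).coprod (M 1 1))
  map_one' := by ext <;> simp
  map_mul' M N := by ext <;> simp [Matrix.mul_apply, Fin.sum_univ_two]
  map_zero' := by ext <;> simp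
  map_add' M N := by ext <;> simp

@[simp] lemma ofBlockMatrix_apply (M : Matrix (Fin 2) (Fin 2) (E →L[𝕜] E)) (v : E × E) :
    ofBlockMatrix M v = (M 0 0 v.1 + M 0 1 v.2, M 1 0 v.1 + M 1 1 v.2) := rfl

lemma ofBlockMatrix_diagonal (A B : E →L[𝕜] E) :
    ofBlockMatrix (diagonal ![A, B]) = A.prodMap B := by
  ext <;> simp

lemma isUnit_prodMap_iff {A : E →L[𝕜] E} {B : F →L[𝕜] F} :
    IsUnit (A.prodMap B) ↔ IsUnit A ∧ IsUnit B := by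
  simp only [isUnit_iff_exists]
  constructor
  · rintro ⟨N, hAN, hNA⟩
    refine ⟨⟨fst 𝕜 E F ∘L N ∘L inl 𝕜 E F, ?_, ?_⟩, ⟨snd 𝕜 E F ∘L N ∘L inr 𝕜 E F, ?_, ?_⟩⟩ <;>
      ext x
    · exact congrArg Prod.fst (DFunLike.congr_fun hAN (x, 0))
    · simpa using congrArg Prod.fst (DFunLike.congr_fun hNA (x, 0))
    · exact congrArg Prod.snd (DFunLike.congr_fun hAN (0, x))
    · simpa using congrArg Prod.snd (DFunLike.congr_fun hNA (0, x))
  · rintro ⟨⟨A', hAA', hA'A⟩, ⟨B', hBB', hB'B⟩⟩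
    refine ⟨A'.prodMap B', ?_, ?_⟩ <;> refine ContinuousLinearMap.ext fun v => Prod.ext ?_ ?_
    · exact DFunLike.congr_fun hAA' v.1
    · exact DFunLike.congr_fun hBB' v.2
    · exact DFunLike.congr_fun hA'A v.1
    · exact DFunLike.congr_fun hB'B v.2

lemma spectrum_prodMap (A : E →L[𝕜] E) (B : F →L[𝕜] F) :
    spectrum 𝕜 (A.prodMap B) = spectrum 𝕜 A ∪ spectrum 𝕜 B := by
  ext z
  have hsub : algebraMap 𝕜 _ z - A.prodMap B =
      (algebraMap 𝕜 _ z - A).prodMap (algebraMap 𝕜 _ z - B) := by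
    ext <;> simp [Algebra.algebraMap_eq_smul_one]
  simp only [Set.mem_union, spectrum.mem_iff, hsub, isUnit_prodMap_iff, not_and_or]

lemma spectrum_ofBlockMatrix_units_conj_diagonal (u : (Matrix (Fin 2) (Fin 2) (E →L[𝕜] E))ˣ)
    (A B : E →L[𝕜] E) :
    spectrum 𝕜 (ofBlockMatrix ((u : Matrix (Fin 2) (Fin 2) (E →L[𝕜] E)) * diagonal ![A, B] *
      (↑u⁻¹ : Matrix (Fin 2) (Fin 2) (E →L[𝕜] E)))) = spectrum 𝕜 A ∪ spectrum 𝕜 B := by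
  have h := spectrum.units_conjugate (R := 𝕜) (a := ofBlockMatrix (diagonal ![A, B]))
    (u := Units.map (ofBlockMatrix : Matrix (Fin 2) (Fin 2) (E →L[𝕜] E) →+* _).toMonoidHom u)
  rw [Units.coe_map, Units.coe_map_inv, ofBlockMatrix_diagonal, spectrum_prodMap] at h
  rw [map_mul, map_mul, ofBlockMatrix_diagonal]
  exact h

end ContinuousLinearMap

section CFCMatrix

variable {R A : Type*} {p : A → Prop} [CommSemiring R] [StarRing R] [MetricSpace R]
  [IsTopologicalSemiring R] [ContinuousStar R] [TopologicalSpace A] [Ring A] [StarRing A]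
  [Algebra R A] [ContinuousFunctionalCalculus R A p] {n : Type*}

noncomputable def cfcMatrix (F : R → Matrix n n R) (a : A) : Matrix n n A :=
  Matrix.of fun i j => cfc (fun x => F x i j) a

lemma cfcMatrix_congr {F G : R → Matrix n n R} {a : A} (h : (spectrum R a).EqOn F G) :
    cfcMatrix F a = cfcMatrix G a :=
  Matrix.ext fun i j => cfc_congr fun x hx => by rw [h hx]

lemma cfcMatrix_mul [Fintype n] (F G : R → Matrix n n R) (a : A)
    (hF : ContinuousOn F (spectrum R a)) (hG : ContinuousOn G (spectrum R a)) :
    cfcMatrix (fun x => F x * G x) a = cfcMatrix F a * cfcMatrix G a := by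
  ext i j
  have hF' k : ContinuousOn (fun x => F x i k) (spectrum R a) :=
    continuousOn_pi.mp (continuousOn_pi.mp hF i) k
  have hG' k : ContinuousOn (fun x => G x k j) (spectrum R a) :=
    continuousOn_pi.mp (continuousOn_pi.mp hG k) j
  have hsum := cfc_sum_univ (fun k x => F x i k * G x k j) a fun k => (hF' k).mul (hG' k)
  rw [Finset.sum_fn] at hsum
  simp only [cfcMatrix, of_apply, Matrix.mul_apply, hsum, cfc_mul _ _ a (hF' _) (hG' _)]

lemma cfcMatrix_one [DecidableEq n] (a : A) (ha : p a) :
    cfcMatrix (fun _ => (1 : Matrix n n R)) a = 1 := by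
  ext i j
  by_cases h : i = j <;> simp [cfcMatrix, one_apply, h, cfc_const_one R a ha]

lemma cfcMatrix_diagonal [DecidableEq n] (d : R → n → R) (a : A) :
    cfcMatrix (fun x => diagonal (d x)) a = diagonal fun i => cfc (fun x => d x i) a := by
  ext i j
  by_cases h : i = j <;> simp [cfcMatrix, diagonal_apply, h]

end CFCMatrix

noncomputable def rotationMatrix (θ : ℝ) : Matrix (Fin 2) (Fin 2) ℝ :=
  !![cos θ, -sin θ; sin θ, cos θ]

@[fun_prop]
lemma continuous_rotationMatrix : Continuous rotationMatrix :=
  continuous_matrix fun i j => by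
    fin_cases i <;> fin_cases j <;> simpa [rotationMatrix] using by fun_prop

lemma rotationMatrix_mul_transpose (θ : ℝ) : rotationMatrix θ * (rotationMatrix θ)ᵀ = 1 := by
  ext i j; fin_cases i <;> fin_cases j <;>
    simp [rotationMatrix, Matrix.mul_apply, Fin.sum_univ_two, ← sq, mul_comm]

lemma transpose_mul_rotationMatrix (θ : ℝ) : (rotationMatrix θ)ᵀ * rotationMatrix θ = 1 := by
  ext i j; fin_cases i <;> fin_cases j <;>
    simp [rotationMatrix, Matrix.mul_apply, Fin.sum_univ_two, ← sq, mul_comm]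

noncomputable def blockSymbol (x : ℝ) : Matrix (Fin 2) (Fin 2) ℝ :=
  !![2 * x, √x * √(1 - x); √x * √(1 - x), 0]

lemma blockSymbol_mul_rotationMatrix {x : ℝ} (hx : x ∈ Icc 0 1) :
    blockSymbol x * rotationMatrix (arccos √x / 2) =
      rotationMatrix (arccos √x / 2) * diagonal ![x + √x, x - √x] := by
  set θ := arccos √x / 2
  have hr : √x = 2 * cos θ ^ 2 - 1 := by
    rw [← cos_two_mul, mul_div_cancel₀ _ two_ne_zero, cos_arccos (by linarith [sqrt_nonneg x])
      (sqrt_le_one.mpr hx.2)]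
  have ht : √(1 - x) = 2 * sin θ * cos θ := by
    rw [← sin_two_mul, mul_div_cancel₀ _ two_ne_zero, sin_arccos, sq_sqrt hx.1]
  have hx2 : x = √x ^ 2 := (sq_sqrt hx.1).symm
  have hp := sin_sq_add_cos_sq θ
  ext i j; fin_cases i <;> fin_cases j <;>
    simp only [blockSymbol, ht, rotationMatrix, Fin.zero_eta, Fin.isValue, Fin.mk_one,
      Matrix.mul_apply, of_apply, cons_val', cons_val_fin_one, cons_val_zero, cons_val_one,
      Fin.sum_univ_two, diagonal_apply_eq, diagonal_apply_ne, ne_eq, one_ne_zero, zero_ne_one,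
      not_false_eq_true, mul_zero, zero_mul, add_zero, zero_add, mul_neg, neg_mul]
  · linear_combination cos θ * hx2 + cos θ * √x * hr + 2 * cos θ * √x * hp
  · linear_combination -sin θ * hx2 - sin θ * √x * hr
  · linear_combination -sin θ * hx2 - sin θ * √x * hr
  · linear_combination -cos θ * hx2 - cos θ * √x * hr - 2 * cos θ * √x * hp

lemma blockSymbol_eq_conj {x : ℝ} (hx : x ∈ Icc 0 1) :
    blockSymbol x = rotationMatrix (arccos √x / 2) * diagonal ![x + √x, x - √x] *
      (rotationMatrix (arccos √x / 2))ᵀ := by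
  rw [← blockSymbol_mul_rotationMatrix hx, mul_assoc, rotationMatrix_mul_transpose, mul_one]

section CStarAlgebra

variable {A : Type*} [CStarAlgebra A] [PartialOrder A] [StarOrderedRing A]

lemma spectrum_subset_Icc_of_mem_Icc {Q : A} (hQ : Q ∈ Icc 0 1) : spectrum ℝ Q ⊆ Icc 0 1 := by
  intro x hx
  refine ⟨spectrum_nonneg_of_nonneg hQ.1 hx, ?_⟩
  have := IsometricContinuousFunctionalCalculus.norm_spectrum_le Q hx (IsSelfAdjoint.of_nonneg hQ.1)
  exact (Real.le_norm_self x).trans (this.trans (CStarAlgebra.mem_Icc_iff_norm_le_one.mp hQ).2)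

lemma CFC.sqrt_cfc {a : A} (f : ℝ → ℝ) (hf : ContinuousOn f (spectrum ℝ a))
    (hf0 : ∀ x ∈ spectrum ℝ a, 0 ≤ f x) :
    CFC.sqrt (cfc f a) = cfc (fun x => √(f x)) a := by
  refine CFC.sqrt_unique ?_ (cfc_nonneg fun x _ => Real.sqrt_nonneg (f x))
  rw [← cfc_mul ..]
  exact cfc_congr fun x hx => Real.mul_self_sqrt (hf0 x hx)

lemma cfc_add_sqrt {Q : A} (hQ : 0 ≤ Q) : cfc (fun x => x + √x) Q = Q + CFC.sqrt Q := by
  rw [cfc_add (a := Q) (fun x => x) Real.sqrt, cfc_id' ℝ Q, CFC.sqrt_eq_real_sqrt Q hQ,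
    cfcₙ_eq_cfc]

lemma cfc_sub_sqrt {Q : A} (hQ : 0 ≤ Q) : cfc (fun x => x - √x) Q = Q - CFC.sqrt Q := by
  rw [cfc_sub (a := Q) (fun x => x) Real.sqrt, cfc_id' ℝ Q, CFC.sqrt_eq_real_sqrt Q hQ,
    cfcₙ_eq_cfc]

lemma exists_blockMatrix_eq_units_conj_diagonal {Q : A} (hQ : Q ∈ Icc 0 1) :
    ∃ u : (Matrix (Fin 2) (Fin 2) A)ˣ,
      (!![(2 : ℝ) • Q, CFC.sqrt Q * CFC.sqrt (1 - Q); CFC.sqrt Q * CFC.sqrt (1 - Q), 0] :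
        Matrix (Fin 2) (Fin 2) A) =
        (u : Matrix (Fin 2) (Fin 2) A) * diagonal ![Q + CFC.sqrt Q, Q - CFC.sqrt Q] *
          (↑u⁻¹ : Matrix (Fin 2) (Fin 2) A) := by
  have hσ := spectrum_subset_Icc_of_mem_Icc hQ
  have hsa : IsSelfAdjoint Q := IsSelfAdjoint.of_nonneg hQ.1
  have hsqrt : CFC.sqrt (1 - Q) = cfc (fun x => √(1 - x)) Q := by
    have := CFC.sqrt_cfc (a := Q) (fun x => 1 - x) (by fun_prop)
      fun x hx => sub_nonneg.mpr (hσ hx).2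
    rwa [cfc_sub .., cfc_const_one ℝ Q, cfc_id' ℝ Q] at this
  have hsymbol : cfcMatrix blockSymbol Q = !![(2 : ℝ) • Q, CFC.sqrt Q * CFC.sqrt (1 - Q);
      CFC.sqrt Q * CFC.sqrt (1 - Q), 0] := by
    ext i j; fin_cases i <;> fin_cases j <;>
      simp only [cfcMatrix, blockSymbol, of_apply, cons_val', cons_val_fin_one, Fin.zero_eta,
        Fin.isValue, Fin.mk_one, cons_val_zero, cons_val_one, cfc_const_zero]
    · exact cfc_const_mul_id (2 : ℝ) Q
    all_goals rw [cfc_mul (fun x => √x) (fun x => √(1 - x)) Q, hsqrt,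
      CFC.sqrt_eq_real_sqrt Q hQ.1, cfcₙ_eq_cfc]
  have hdiag : cfcMatrix (fun x => diagonal ![x + √x, x - √x]) Q =
      diagonal ![Q + CFC.sqrt Q, Q - CFC.sqrt Q] := by
    rw [cfcMatrix_diagonal]
    congr 1; ext i; fin_cases i
    · exact cfc_add_sqrt hQ.1
    · exact cfc_sub_sqrt hQ.1
  set ρ : ℝ → Matrix (Fin 2) (Fin 2) ℝ := fun x => rotationMatrix (arccos √x / 2)
  refine ⟨⟨cfcMatrix ρ Q, cfcMatrix (fun x => (ρ x)ᵀ) Q, ?_, ?_⟩, ?_⟩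
  · rw [← cfcMatrix_mul _ _ _ (by fun_prop) (by fun_prop)]
    simp only [ρ, rotationMatrix_mul_transpose, cfcMatrix_one Q hsa]
  · rw [← cfcMatrix_mul _ _ _ (by fun_prop) (by fun_prop)]
    simp only [ρ, transpose_mul_rotationMatrix, cfcMatrix_one Q hsa]
  · rw [← hsymbol, ← hdiag, cfcMatrix_congr fun x hx => blockSymbol_eq_conj (hσ hx),
      cfcMatrix_mul _ _ _ (by fun_prop) (by fun_prop),
      cfcMatrix_mul _ _ _ (by fun_prop) (by fun_prop)]
    rfl

omit [PartialOrder A] [StarOrderedRing A] in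
lemma spectrum_cfc_real {a : A} (f : ℝ → ℝ) (hf : ContinuousOn f (spectrum ℝ a))
    (ha : IsSelfAdjoint a) :
    spectrum ℂ (cfc f a) = {z | ∃ l : ℝ, (l : ℂ) ∈ spectrum ℂ a ∧ z = (f l : ℂ)} := by
  rw [← (cfc_predicate f a).spectrumRestricts.algebraMap_image, cfc_map_spectrum f a]
  have hmem (l : ℝ) : (l : ℂ) ∈ spectrum ℂ a ↔ l ∈ spectrum ℝ a :=
    spectrum.algebraMap_mem_iff ℂ (r := l)
  ext z
  simp [hmem, eq_comm]

end CStarAlgebra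

open ContinuousLinearMap in
theorem spectrum_blockW_general
    {K K' : Type*} [NormedAddCommGroup K] [InnerProductSpace ℂ K] [CompleteSpace K]
    [NormedAddCommGroup K'] [InnerProductSpace ℂ K'] [CompleteSpace K']
    (Q₀ : K →L[ℂ] K) (hpos : 0 ≤ Q₀) (hc : ‖Q₀‖ ≤ 1)
    (D : K' →L[ℂ] K) (hD1 : adjoint D ∘L D = ContinuousLinearMap.id ℂ K')
    (hD2 : D ∘L adjoint D = ContinuousLinearMap.id ℂ K)
    (W : WithLp 2 (K × K') →L[ℂ] WithLp 2 (K × K'))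
    (hW : ∀ (x : K) (y : K'),
      W ((WithLp.equiv 2 (K × K')).symm (x, y)) =
        (WithLp.equiv 2 (K × K')).symm
          ((2 : ℂ) • Q₀ x + (CFC.sqrt Q₀) ((CFC.sqrt (1 - Q₀)) (D y)),
           adjoint D ((CFC.sqrt Q₀) ((CFC.sqrt (1 - Q₀)) x)))) :
    spectrum ℂ W = spectrum ℂ (Q₀ + CFC.sqrt Q₀) ∪ spectrum ℂ (Q₀ - CFC.sqrt Q₀) ∧
    spectrum ℂ W =
      {z : ℂ | ∃ l : ℝ, (l : ℂ) ∈ spectrum ℂ Q₀ ∧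
        (z = ((l + Real.sqrt l : ℝ) : ℂ) ∨ z = ((l - Real.sqrt l : ℝ) : ℂ))} := by
  obtain ⟨u, hu⟩ := exists_blockMatrix_eq_units_conj_diagonal
    (CStarAlgebra.mem_Icc_iff_norm_le_one.mpr ⟨hpos, hc⟩)
  let Ψ : (K × K) ≃L[ℂ] WithLp 2 (K × K') :=
    ((ContinuousLinearEquiv.refl ℂ K).prodCongr
      (ContinuousLinearEquiv.equivOfInverse' (adjoint D) D hD1 hD2)).trans
      (WithLp.prodContinuousLinearEquiv 2 ℂ K K').symm
  have hWΨ : W = Ψ.conjContinuousAlgEquiv (ofBlockMatrix !![(2 : ℝ) • Q₀,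
      CFC.sqrt Q₀ * CFC.sqrt (1 - Q₀); CFC.sqrt Q₀ * CFC.sqrt (1 - Q₀), 0]) := by
    ext v
    obtain ⟨⟨x, y⟩, rfl⟩ := (WithLp.equiv 2 (K × K')).symm.surjective v
    simpa [Ψ, two_smul] using hW x y
  have hσW : spectrum ℂ W = spectrum ℂ (Q₀ + CFC.sqrt Q₀) ∪ spectrum ℂ (Q₀ - CFC.sqrt Q₀) := by
    rw [hWΨ, AlgEquiv.spectrum_eq, hu, spectrum_ofBlockMatrix_units_conj_diagonal]
  refine ⟨hσW, ?_⟩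
  have hsa := IsSelfAdjoint.of_nonneg hpos
  rw [hσW, ← cfc_add_sqrt hpos, ← cfc_sub_sqrt hpos,
    spectrum_cfc_real (fun x => x + √x) (by fun_prop) hsa,
    spectrum_cfc_real (fun x => x - √x) (by fun_prop) hsa]
  ext z
  simp only [Set.mem_union, Set.mem_ofPred_eq, and_or_left, exists_or]

open ContinuousLinearMap in
/-- For a positive contraction `Q₀` on `K`, a unitary `D : K' → K`, and the block operator
`W(x, y) = (2Q₀x + Q₀^{1/2}(I - Q₀)^{1/2}Dy, D*(Q₀^{1/2}(I - Q₀)^{1/2}x))` on `K × K'`,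
`σ(W) = σ(Q₀ + Q₀^{1/2}) ∪ σ(Q₀ - Q₀^{1/2}) = {λ ± √λ : λ ∈ σ(Q₀)}`. -/
theorem spectrum_blockW
    {K K' : Type*} [NormedAddCommGroup K] [InnerProductSpace ℂ K] [CompleteSpace K]
    [NormedAddCommGroup K'] [InnerProductSpace ℂ K'] [CompleteSpace K']
    (Q₀ : K →L[ℂ] K) (hsa : IsSelfAdjoint Q₀) (hpos : 0 ≤ Q₀) (hc : ‖Q₀‖ ≤ 1)
    (D : K' →L[ℂ] K) (hD1 : adjoint D ∘L D = ContinuousLinearMap.id ℂ K')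
    (hD2 : D ∘L adjoint D = ContinuousLinearMap.id ℂ K)
    (W : WithLp 2 (K × K') →L[ℂ] WithLp 2 (K × K'))
    (hW : ∀ (x : K) (y : K'),
      W ((WithLp.equiv 2 (K × K')).symm (x, y)) =
        (WithLp.equiv 2 (K × K')).symm
          ((2 : ℂ) • Q₀ x + (CFC.sqrt Q₀) ((CFC.sqrt (1 - Q₀)) (D y)),
           adjoint D ((CFC.sqrt Q₀) ((CFC.sqrt (1 - Q₀)) x)))) :
    spectrum ℂ W = spectrum ℂ (Q₀ + CFC.sqrt Q₀) ∪ spectrum ℂ (Q₀ - CFC.sqrt Q₀) ∧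
    spectrum ℂ W =
      {z : ℂ | ∃ l : ℝ, (l : ℂ) ∈ spectrum ℂ Q₀ ∧
        (z = ((l + Real.sqrt l : ℝ) : ℂ) ∨ z = ((l - Real.sqrt l : ℝ) : ℂ))} :=
  spectrum_blockW_general Q₀ hpos hc D hD1 hD2 W hW
end

section
/- Let K and K' be complex Hilbert spaces with K nontrivial, let Q₀ be a positive contraction on K, and let D : K' → K be a unitary operator. Define the bounded operator W on K × K' by W(x, y) = ( 2Q₀x + Q₀^{1/2}(I − Q₀)^{1/2} D y , D*( Q₀^{1/2}(I − Q₀)^{1/2} x ) ). Then 0 ∈ σ(W) if and only if 0 ∈ σ(Q₀) or 1 ∈ σ(Q₀). -/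
/-!
Write `S = Q₀^{1/2}(I - Q₀)^{1/2}`. Conjugating `W` by the unitary `id × D` gives the saddle-point
operator `(x, z) ↦ (2Q₀x + Sz, Sx)` on `K × K`; because of its zero corner, it is bijective exactly
when `S` is, and by the open mapping theorem bijectivity is invertibility. The two square roots
commute, so `S` is invertible iff both `Q₀` and `I - Q₀` are.
-/

open Function

theorem bijective_saddlePointMap_iff {E : Type*} [AddGroup E] (A S : E → E) :
    Bijective (fun p : E × E ↦ (A p.1 + S p.2, S p.1)) ↔ Bijective S := by
  constructor
  · rintro ⟨hinj, hsurj⟩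
    refine ⟨fun x x' hx ↦ ?_, fun w ↦ ?_⟩
    · exact congrArg Prod.snd (@hinj (0, x) (0, x') (by simp only [hx]))
    · obtain ⟨p, hp⟩ := hsurj (0, w)
      exact ⟨p.1, congrArg Prod.snd hp⟩
  · rintro ⟨hinj, hsurj⟩
    refine ⟨fun p p' hp ↦ ?_, fun q ↦ ?_⟩
    · simp only [Prod.mk.injEq] at hp
      have h₁ : p.1 = p'.1 := hinj hp.2
      rw [h₁, add_left_cancel_iff] at hp
      exact Prod.ext h₁ (hinj hp.1)
    · obtain ⟨x, hx⟩ := hsurj q.2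
      obtain ⟨z, hz⟩ := hsurj (-A x + q.1)
      exact ⟨(x, z), by simp [hx, hz]⟩

theorem bijective_withLp_blockMap_iff {E F : Type*} [AddGroup E] (p : ENNReal) (A S : E → E)
    (D : F ≃ E) (W : WithLp p (E × F) → WithLp p (E × F))
    (hW : ∀ x y, W (WithLp.toLp p (x, y)) = WithLp.toLp p (A x + S (D y), D.symm (S x))) :
    Bijective W ↔ Bijective S := by
  let Φ : WithLp p (E × F) ≃ E × E := (WithLp.equiv p _).trans ((Equiv.refl E).prodCongr D)
  have hWΦ : W = Φ.symm ∘ (fun q : E × E ↦ (A q.1 + S q.2, S q.1)) ∘ Φ := by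
    funext z
    obtain ⟨x, y⟩ := z
    simpa [Φ] using hW x y
  rw [hWΦ, Equiv.comp_bijective, Equiv.bijective_comp, bijective_saddlePointMap_iff]

theorem isUnit_sqrt_mul_sqrt_one_sub_iff {A : Type*} [CStarAlgebra A] [PartialOrder A]
    [StarOrderedRing A] {a : A} (ha₀ : 0 ≤ a) (ha₁ : a ≤ 1) :
    IsUnit (CFC.sqrt a * CFC.sqrt (1 - a)) ↔ IsUnit a ∧ IsUnit (1 - a) := by
  have hcomm : Commute (CFC.sqrt a) (CFC.sqrt (1 - a)) := by
    rw [CFC.sqrt_eq_cfc, CFC.sqrt_eq_cfc]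
    exact ((((Commute.one_left a).sub_left (Commute.refl a)).cfc_nnreal _).symm.cfc_nnreal _)
  rw [hcomm.isUnit_mul_iff, CFC.isUnit_sqrt_iff a, CFC.isUnit_sqrt_iff (1 - a) (sub_nonneg.2 ha₁)]

open ContinuousLinearMap in
theorem zero_mem_spectrum_blockW_iff_general
    {K K' : Type*} [NormedAddCommGroup K] [InnerProductSpace ℂ K] [CompleteSpace K]
    [NormedAddCommGroup K'] [InnerProductSpace ℂ K'] [CompleteSpace K']
    (Q₀ : K →L[ℂ] K) (hpos : 0 ≤ Q₀) (hc : ‖Q₀‖ ≤ 1)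
    (D : K' →L[ℂ] K) (hD1 : adjoint D ∘L D = ContinuousLinearMap.id ℂ K')
    (hD2 : D ∘L adjoint D = ContinuousLinearMap.id ℂ K)
    (W : WithLp 2 (K × K') →L[ℂ] WithLp 2 (K × K'))
    (hW : ∀ (x : K) (y : K'),
      W ((WithLp.equiv 2 (K × K')).symm (x, y)) =
        (WithLp.equiv 2 (K × K')).symm
          ((2 : ℂ) • Q₀ x + (CFC.sqrt Q₀) ((CFC.sqrt (1 - Q₀)) (D y)),
           adjoint D ((CFC.sqrt Q₀) ((CFC.sqrt (1 - Q₀)) x)))) :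
    (0 : ℂ) ∈ spectrum ℂ W ↔ (0 : ℂ) ∈ spectrum ℂ Q₀ ∨ (1 : ℂ) ∈ spectrum ℂ Q₀ := by
  have hQ₁ : Q₀ ≤ 1 := (CStarAlgebra.norm_le_one_iff_of_nonneg Q₀ hpos).mp hc
  let U : K' ≃L[ℂ] K := .equivOfInverse' D (adjoint D) hD2 hD1
  have hWS : IsUnit W ↔ IsUnit (CFC.sqrt Q₀ * CFC.sqrt (1 - Q₀)) := by
    rw [isUnit_iff_bijective, isUnit_iff_bijective]
    exact bijective_withLp_blockMap_iff 2 _ _ U.toEquiv W hW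
  rw [spectrum.zero_mem_iff, spectrum.zero_mem_iff, spectrum.mem_iff, map_one, ← not_and_or,
    not_iff_not, hWS, isUnit_sqrt_mul_sqrt_one_sub_iff hpos hQ₁]

open ContinuousLinearMap in
/-- For a positive contraction `Q₀` on a nontrivial `K`, a unitary `D : K' → K`, and the block
operator `W(x, y) = (2Q₀x + Q₀^{1/2}(I - Q₀)^{1/2}Dy, D*(Q₀^{1/2}(I - Q₀)^{1/2}x))` on `K × K'`,
`0 ∈ σ(W)` iff `0 ∈ σ(Q₀)` or `1 ∈ σ(Q₀)`. -/
theorem zero_mem_spectrum_blockW_iff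
    {K K' : Type*} [NormedAddCommGroup K] [InnerProductSpace ℂ K] [CompleteSpace K]
    [Nontrivial K]
    [NormedAddCommGroup K'] [InnerProductSpace ℂ K'] [CompleteSpace K']
    (Q₀ : K →L[ℂ] K) (hsa : IsSelfAdjoint Q₀) (hpos : 0 ≤ Q₀) (hc : ‖Q₀‖ ≤ 1)
    (D : K' →L[ℂ] K) (hD1 : adjoint D ∘L D = ContinuousLinearMap.id ℂ K')
    (hD2 : D ∘L adjoint D = ContinuousLinearMap.id ℂ K)
    (W : WithLp 2 (K × K') →L[ℂ] WithLp 2 (K × K'))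
    (hW : ∀ (x : K) (y : K'),
      W ((WithLp.equiv 2 (K × K')).symm (x, y)) =
        (WithLp.equiv 2 (K × K')).symm
          ((2 : ℂ) • Q₀ x + (CFC.sqrt Q₀) ((CFC.sqrt (1 - Q₀)) (D y)),
           adjoint D ((CFC.sqrt Q₀) ((CFC.sqrt (1 - Q₀)) x)))) :
    (0 : ℂ) ∈ spectrum ℂ W ↔ (0 : ℂ) ∈ spectrum ℂ Q₀ ∨ (1 : ℂ) ∈ spectrum ℂ Q₀ :=
  zero_mem_spectrum_blockW_iff_general Q₀ hpos hc D hD1 hD2 W hW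
end

section
/- Let K and K' be complex Hilbert spaces, let Q₀ be a positive contraction on K, and let D : K' → K be a unitary operator. Define the bounded operator W on K × K' by W(x, y) = ( 2Q₀x + Q₀^{1/2}(I − Q₀)^{1/2} D y , D*( Q₀^{1/2}(I − Q₀)^{1/2} x ) ). Then σ(W) \ {0} = ( σ(Q₀ + Q₀^{1/2}) ∪ σ(Q₀ − Q₀^{1/2}) ) \ {0}. -/
set_option synthInstance.maxHeartbeats 400000
set_option maxHeartbeats 1000000

open ContinuousLinearMap in
/-- For a positive contraction `Q₀` on `K`, a unitary `D : K' → K`, and the block operator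
`W(x, y) = (2Q₀x + Q₀^{1/2}(I - Q₀)^{1/2}Dy, D*(Q₀^{1/2}(I - Q₀)^{1/2}x))` on `K × K'`,
`σ(W) \ {0} = (σ(Q₀ + Q₀^{1/2}) ∪ σ(Q₀ - Q₀^{1/2})) \ {0}`. -/
theorem spectrum_blockW_sdiff_zero
    {K K' : Type*} [NormedAddCommGroup K] [InnerProductSpace ℂ K] [CompleteSpace K]
    [NormedAddCommGroup K'] [InnerProductSpace ℂ K'] [CompleteSpace K']
    (Q₀ : K →L[ℂ] K) (hsa : IsSelfAdjoint Q₀) (hpos : 0 ≤ Q₀) (hc : ‖Q₀‖ ≤ 1)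
    (D : K' →L[ℂ] K) (hD1 : adjoint D ∘L D = ContinuousLinearMap.id ℂ K')
    (hD2 : D ∘L adjoint D = ContinuousLinearMap.id ℂ K)
    (W : WithLp 2 (K × K') →L[ℂ] WithLp 2 (K × K'))
    (hW : ∀ (x : K) (y : K'),
      W ((WithLp.equiv 2 (K × K')).symm (x, y)) =
        (WithLp.equiv 2 (K × K')).symm
          ((2 : ℂ) • Q₀ x + (CFC.sqrt Q₀) ((CFC.sqrt (1 - Q₀)) (D y)),
           adjoint D ((CFC.sqrt Q₀) ((CFC.sqrt (1 - Q₀)) x)))) :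
    spectrum ℂ W \ {0} =
      (spectrum ℂ (Q₀ + CFC.sqrt Q₀) ∪ spectrum ℂ (Q₀ - CFC.sqrt Q₀)) \ {0} := by
  classical
  set S := CFC.sqrt Q₀ with hSdef
  set T := CFC.sqrt (1 - Q₀) with hTdef
  set A := S * T with hAdef
  -- basic order facts
  have hQ1 : Q₀ ≤ 1 := by
    calc Q₀ ≤ algebraMap ℝ (K →L[ℂ] K) ‖Q₀‖ := IsSelfAdjoint.le_algebraMap_norm_self hsa
    _ ≤ 1 := by
      rw [Algebra.algebraMap_eq_smul_one]
      calc ‖Q₀‖ • (1 : K →L[ℂ] K) ≤ (1:ℝ) • (1 : K →L[ℂ] K) :=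
            smul_le_smul_of_nonneg_right hc zero_le_one
      _ = 1 := one_smul _ _
  have h1Q : (0 : K →L[ℂ] K) ≤ 1 - Q₀ := sub_nonneg.mpr hQ1
  have hS2 : S * S = Q₀ := CFC.sqrt_mul_sqrt_self Q₀ hpos
  have hT2 : T * T = 1 - Q₀ := CFC.sqrt_mul_sqrt_self _ h1Q
  have hspec : ∀ x ∈ spectrum ℝ Q₀, 0 ≤ x ∧ x ≤ 1 := by
    intro x hx
    refine ⟨spectrum_nonneg_of_nonneg hpos hx, ?_⟩
    have hx1 : (1:ℝ) - x ∈ spectrum ℝ ((1:K →L[ℂ] K) - Q₀) := by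
      rw [show (1 : K →L[ℂ] K) = algebraMap ℝ (K →L[ℂ] K) 1 from (map_one _).symm,
        ← spectrum.singleton_sub_eq]
      exact Set.sub_mem_sub rfl hx
    linarith [spectrum_nonneg_of_nonneg h1Q hx1]
  have hScfc : S = cfc Real.sqrt Q₀ := by
    refine CFC.sqrt_unique ?_ (cfc_nonneg (fun x _ => Real.sqrt_nonneg x))
    calc cfc Real.sqrt Q₀ * cfc Real.sqrt Q₀ = cfc (fun x : ℝ => Real.sqrt x * Real.sqrt x) Q₀ :=
          (cfc_mul _ _ Q₀).symm
    _ = cfc (fun x : ℝ => x) Q₀ := cfc_congr (fun x hx => Real.mul_self_sqrt (hspec x hx).1)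
    _ = Q₀ := cfc_id' ℝ Q₀
  have hTcfc : T = cfc (fun x : ℝ => Real.sqrt (1 - x)) Q₀ := by
    refine CFC.sqrt_unique ?_ (cfc_nonneg (fun x _ => Real.sqrt_nonneg _))
    calc cfc (fun x : ℝ => Real.sqrt (1-x)) Q₀ * cfc (fun x : ℝ => Real.sqrt (1-x)) Q₀
        = cfc (fun x : ℝ => Real.sqrt (1-x) * Real.sqrt (1-x)) Q₀ := (cfc_mul _ _ Q₀).symm
    _ = cfc (fun x : ℝ => 1 - x) Q₀ :=
          cfc_congr (fun x hx => Real.mul_self_sqrt (by linarith [(hspec x hx).2]))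
    _ = 1 - Q₀ := by rw [cfc_sub _ _ Q₀, cfc_id' ℝ Q₀, cfc_const_one ℝ Q₀]
  have hST : Commute S T := by
    rw [hScfc, hTcfc]; exact cfc_commute_cfc _ _ _
  have hQS : Commute Q₀ S := by
    have := (Commute.refl S).mul_left (Commute.refl S)
    rwa [hS2] at this
  have hA2 : A * A = Q₀ - Q₀ * Q₀ := by
    have h1 : A * A = S * S * (T * T) := by
      rw [hAdef]
      calc S * T * (S * T) = S * (T * S) * T := by rw [mul_assoc, mul_assoc, ← mul_assoc T S T]
      _ = S * (S * T) * T := by rw [hST.symm.eq]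
      _ = S * S * (T * T) := by rw [mul_assoc, mul_assoc, mul_assoc]
    rw [h1, hS2, hT2, mul_sub, mul_one]
  -- coordinates on the Hilbert sum
  set e : WithLp 2 (K × K') ≃L[ℂ] K × K' := WithLp.prodContinuousLinearEquiv 2 ℂ K K' with hedef
  have hesymm : ∀ p : K × K', e.symm p = (WithLp.equiv 2 (K × K')).symm p := fun p => rfl
  have hWe : ∀ z : WithLp 2 (K × K'),
      e (W z) = ((2 : ℂ) • Q₀ (e z).1 + A (D (e z).2), adjoint D (A (e z).1)) := by
    intro z
    have h1 : (WithLp.equiv 2 (K × K')).symm ((e z).1, (e z).2) = z := by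
      rw [← hesymm]; exact e.symm_apply_apply z
    have h2 := hW (e z).1 (e z).2
    rw [h1] at h2
    rw [h2, ← hesymm, e.apply_symm_apply]
    simp [hAdef, ContinuousLinearMap.mul_apply]
  have hDD : ∀ x : K, D (adjoint D x) = x := by
    intro x
    have := ContinuousLinearMap.ext_iff.mp hD2 x
    simpa using this
  -- the key invertibility equivalence
  have key : ∀ l : ℂ, l ≠ 0 →
      (IsUnit (algebraMap ℂ (WithLp 2 (K × K') →L[ℂ] WithLp 2 (K × K')) l - W) ↔
        (IsUnit (algebraMap ℂ (K →L[ℂ] K) l - (Q₀ + S)) ∧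
         IsUnit (algebraMap ℂ (K →L[ℂ] K) l - (Q₀ - S)))) := by
    intro l hl
    set a : K →L[ℂ] K := algebraMap ℂ (K →L[ℂ] K) l with hadef
    set M : K →L[ℂ] K := a * (a - (2:ℂ) • Q₀) - A * A with hMdef
    have haK : ∀ x : K, a x = l • x := by
      intro x; rw [hadef, Algebra.algebraMap_eq_smul_one]; simp
    have hMapp : ∀ x : K, M x = l • (l • x) - l • ((2:ℂ) • Q₀ x) - A (A x) := by
      intro x
      rw [hMdef]
      simp only [ContinuousLinearMap.sub_apply, ContinuousLinearMap.mul_apply,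
        ContinuousLinearMap.smul_apply, haK, smul_sub, sub_sub]
    -- factorization of M
    have hfact1 : (a - (Q₀ + S)) * (a - (Q₀ - S)) = M := by
      ext x
      have h1 : S (S x) = Q₀ x := by rw [← ContinuousLinearMap.mul_apply, hS2]
      have h2 : Q₀ (S x) = S (Q₀ x) := by
        rw [← ContinuousLinearMap.mul_apply, ← ContinuousLinearMap.mul_apply, hQS.eq]
      have h3 : A (A x) = Q₀ x - Q₀ (Q₀ x) := by
        rw [← ContinuousLinearMap.mul_apply, hA2]
        simp [ContinuousLinearMap.sub_apply, ContinuousLinearMap.mul_apply]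
      rw [ContinuousLinearMap.mul_apply]
      simp only [ContinuousLinearMap.sub_apply, ContinuousLinearMap.add_apply, haK,
        map_sub, map_add, map_smul, hMapp, h3, h1, h2]
      module
    have hfact2 : (a - (Q₀ - S)) * (a - (Q₀ + S)) = M := by
      ext x
      have h1 : S (S x) = Q₀ x := by rw [← ContinuousLinearMap.mul_apply, hS2]
      have h2 : Q₀ (S x) = S (Q₀ x) := by
        rw [← ContinuousLinearMap.mul_apply, ← ContinuousLinearMap.mul_apply, hQS.eq]
      have h3 : A (A x) = Q₀ x - Q₀ (Q₀ x) := by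
        rw [← ContinuousLinearMap.mul_apply, hA2]
        simp [ContinuousLinearMap.sub_apply, ContinuousLinearMap.mul_apply]
      rw [ContinuousLinearMap.mul_apply]
      simp only [ContinuousLinearMap.sub_apply, ContinuousLinearMap.add_apply, haK,
        map_sub, map_add, map_smul, hMapp, h3, h1, h2]
      module
    have hcomm : Commute (a - (Q₀ + S)) (a - (Q₀ - S)) := hfact1.trans hfact2.symm
    have hMunit : IsUnit M ↔ (IsUnit (a - (Q₀ + S)) ∧ IsUnit (a - (Q₀ - S))) := by
      rw [← hfact1, hcomm.isUnit_mul_iff]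
    rw [← hMunit]
    -- now the Schur complement equivalence
    set a' : WithLp 2 (K × K') →L[ℂ] WithLp 2 (K × K') :=
      algebraMap ℂ _ l with ha'def
    have ha'X : ∀ z : WithLp 2 (K × K'), a' z = l • z := by
      intro z; rw [ha'def, Algebra.algebraMap_eq_smul_one]; simp
    have hsub : ∀ z : WithLp 2 (K × K'),
        e ((a' - W) z) = (l • (e z).1 - ((2 : ℂ) • Q₀ (e z).1 + A (D (e z).2)),
          l • (e z).2 - adjoint D (A (e z).1)) := by
      intro z
      rw [ContinuousLinearMap.sub_apply, map_sub, ha'X, map_smul, hWe]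
      rfl
    constructor
    · -- IsUnit (a' - W) → IsUnit M
      rintro ⟨u, hu⟩
      set V : WithLp 2 (K × K') →L[ℂ] WithLp 2 (K × K') := (u⁻¹).val with hVdef
      have hV1 : ∀ z, V ((a' - W) z) = z := by
        intro z
        have h : V * (a' - W) = 1 := by rw [hVdef, ← hu]; exact u.inv_mul
        rw [← ContinuousLinearMap.mul_apply, h, ContinuousLinearMap.one_apply]
      have hV2 : ∀ z, (a' - W) (V z) = z := by
        intro z
        have h : (a' - W) * V = 1 := by rw [hVdef, ← hu]; exact u.mul_inv
        rw [← ContinuousLinearMap.mul_apply, h, ContinuousLinearMap.one_apply]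
      set R : K →L[ℂ] K := l⁻¹ • ((ContinuousLinearMap.fst ℂ K K') ∘L (e : _ →L[ℂ] _) ∘L V ∘L
        (e.symm : _ →L[ℂ] _) ∘L (ContinuousLinearMap.inl ℂ K K')) with hRdef
      have hRapp : ∀ x : K, R x = l⁻¹ • (e (V (e.symm (x, 0)))).1 := by
        intro x
        rw [hRdef]
        simp [ContinuousLinearMap.comp_apply]
      -- R is a left inverse of M
      have hRM : ∀ x : K, R (M x) = x := by
        intro x
        have hcalc : (a' - W) (e.symm (x, l⁻¹ • adjoint D (A x)))
            = e.symm (l⁻¹ • M x, 0) := by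
          apply e.injective
          rw [hsub, e.apply_symm_apply, e.apply_symm_apply]
          dsimp only
          have c2 : l • (l⁻¹ • adjoint D (A x)) - adjoint D (A x) = 0 := by
            rw [smul_inv_smul₀ hl, sub_self]
          have c1 : l • x - ((2 : ℂ) • Q₀ x + A (D (l⁻¹ • adjoint D (A x)))) = l⁻¹ • M x := by
            rw [map_smul, map_smul, hDD, hMapp]
            match_scalars <;> field_simp <;> ring
          rw [c1, c2]
        have hlift := congrArg V hcalc
        rw [hV1] at hlift
        have hsmul : (e.symm (l⁻¹ • M x, (0:K'))) = l⁻¹ • e.symm (M x, 0) := by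
          have hp : (l⁻¹ • M x, (0:K')) = l⁻¹ • (M x, (0:K')) := by
            simp [Prod.smul_mk]
          rw [hp, map_smul]
        have hfst := congrArg (fun z => (e z).1) hlift
        simp only [hsmul, map_smul, e.apply_symm_apply, Prod.smul_fst] at hfst
        rw [hRapp, ← hfst]
      -- R is a right inverse of M
      have hMR : ∀ x : K, M (R x) = x := by
        intro x
        set p := V (e.symm (x, (0:K'))) with hpdef
        have hp : (a' - W) p = e.symm (x, 0) := hV2 _
        have hpe := congrArg e hp
        rw [hsub, e.apply_symm_apply] at hpe
        have E1 : l • (e p).1 - ((2 : ℂ) • Q₀ (e p).1 + A (D (e p).2)) = x :=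
          congrArg Prod.fst hpe
        have E2 : l • (e p).2 - adjoint D (A (e p).1) = 0 := congrArg Prod.snd hpe
        have E2' : adjoint D (A (e p).1) = l • (e p).2 := by
          rw [← sub_eq_zero]; rw [← neg_sub] at E2; simpa using congrArg Neg.neg E2
        have hAA : A (A (e p).1) = l • A (D (e p).2) := by
          conv_lhs => rw [← hDD (A (e p).1), E2', map_smul, map_smul]
        have hMp : M (e p).1 = l • x := by
          rw [hMapp, hAA, ← E1]
          module
        have hRx : R x = l⁻¹ • (e p).1 := by rw [hRapp, hpdef]
        rw [hRx, map_smul, hMp, smul_smul, inv_mul_cancel₀ hl, one_smul]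
      exact ⟨⟨M, R, by ext x; exact hMR x, by ext x; exact hRM x⟩, rfl⟩
    · -- IsUnit M → IsUnit (a' - W)
      rintro ⟨u, hu⟩
      set R : K →L[ℂ] K := (u⁻¹).val with hRdef
      have hMR : ∀ x, M (R x) = x := by
        intro x
        have h : M * R = 1 := by rw [hRdef, ← hu]; exact u.mul_inv
        rw [← ContinuousLinearMap.mul_apply, h, ContinuousLinearMap.one_apply]
      have hRM : ∀ x, R (M x) = x := by
        intro x
        have h : R * M = 1 := by rw [hRdef, ← hu]; exact u.inv_mul
        rw [← ContinuousLinearMap.mul_apply, h, ContinuousLinearMap.one_apply]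
      set F1 : (K × K') →L[ℂ] K :=
        R ∘L (l • ContinuousLinearMap.fst ℂ K K' + (A ∘L D) ∘L ContinuousLinearMap.snd ℂ K K')
        with hF1def
      set F2 : (K × K') →L[ℂ] K' :=
        l⁻¹ • (ContinuousLinearMap.snd ℂ K K' + (adjoint D ∘L A) ∘L F1) with hF2def
      set N : WithLp 2 (K × K') →L[ℂ] WithLp 2 (K × K') :=
        (e.symm : _ →L[ℂ] _) ∘L (F1.prod F2) ∘L (e : _ →L[ℂ] _) with hNdef
      have hF1app : ∀ p : K × K', F1 p = R (l • p.1 + A (D p.2)) := by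
        intro p; rw [hF1def]; simp [ContinuousLinearMap.comp_apply]
      have hF2app : ∀ p : K × K', F2 p = l⁻¹ • (p.2 + adjoint D (A (F1 p))) := by
        intro p; rw [hF2def]; simp [ContinuousLinearMap.comp_apply]
      have hNapp : ∀ z, e (N z) = (F1 (e z), F2 (e z)) := by
        intro z
        rw [hNdef]
        simp [ContinuousLinearMap.comp_apply]
      have hright : (a' - W) * N = 1 := by
        ext z
        rw [ContinuousLinearMap.mul_apply, ContinuousLinearMap.one_apply]
        apply e.injective
        rw [hsub, hNapp]
        set z₁ := (e z).1
        set z₂ := (e z).2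
        set u₀ := F1 (e z) with hu₀def
        have hMu : M u₀ = l • z₁ + A (D z₂) := by rw [hu₀def, hF1app, hMR]
        have hMu' : l • (l • u₀) - l • ((2:ℂ) • Q₀ u₀) - A (A u₀) = l • z₁ + A (D z₂) := by
          rw [← hMapp, hMu]
        have hF2z : F2 (e z) = l⁻¹ • (z₂ + adjoint D (A u₀)) := hF2app _
        apply Prod.ext
        · show l • u₀ - ((2:ℂ) • Q₀ u₀ + A (D (F2 (e z)))) = z₁
          have h5 : A (D (F2 (e z))) = l⁻¹ • A (D z₂) + l⁻¹ • A (A u₀) := by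
            rw [hF2z, map_smul, map_smul, map_add, map_add, hDD, smul_add]
          rw [h5]
          have hmain : l • (l • u₀ - ((2:ℂ) • Q₀ u₀ + (l⁻¹ • A (D z₂) + l⁻¹ • A (A u₀))))
              = l • z₁ := by
            rw [smul_sub, smul_add, smul_add, smul_inv_smul₀ hl, smul_inv_smul₀ hl]
            linear_combination (norm := module) hMu'
          exact smul_right_injective K hl hmain
        · show l • F2 (e z) - adjoint D (A u₀) = z₂
          rw [hF2z, smul_inv_smul₀ hl, add_sub_cancel_right]
      have hleft : N * (a' - W) = 1 := by
        ext z
        rw [ContinuousLinearMap.mul_apply, ContinuousLinearMap.one_apply]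
        apply e.injective
        rw [hNapp, hsub]
        set p₁ := (e z).1
        set p₂ := (e z).2
        have hg : F1 (l • p₁ - ((2:ℂ) • Q₀ p₁ + A (D p₂)), l • p₂ - adjoint D (A p₁)) = p₁ := by
          rw [hF1app]
          have : l • (l • p₁ - ((2:ℂ) • Q₀ p₁ + A (D p₂)))
              + A (D (l • p₂ - adjoint D (A p₁))) = M p₁ := by
            rw [map_sub, map_smul, map_sub, map_smul, hDD, hMapp]
            module
          rw [this, hRM]
        apply Prod.ext
        · exact hg
        · show F2 (l • p₁ - ((2:ℂ) • Q₀ p₁ + A (D p₂)), l • p₂ - adjoint D (A p₁)) = p₂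
          rw [hF2app, hg]
          show l⁻¹ • (l • p₂ - adjoint D (A p₁) + adjoint D (A p₁)) = p₂
          rw [sub_add_cancel, inv_smul_smul₀ hl]
      exact ⟨⟨a' - W, N, hright, hleft⟩, rfl⟩
  -- final set-theoretic assembly
  ext l
  simp only [Set.mem_diff, Set.mem_union, Set.mem_singleton_iff, spectrum.mem_iff]
  constructor
  · rintro ⟨h, hl⟩
    refine ⟨?_, hl⟩
    have := (key l hl).not
    rw [not_and_or] at this
    exact this.mp h
  · rintro ⟨h, hl⟩
    refine ⟨?_, hl⟩
    rw [(key l hl).not, not_and_or]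
    exact h
end

section
/- Let K be a complex Hilbert space and let Q₀ be a positive contraction on K. Then the block operator Q on K × K given by Q(x, y) = ( Q₀x + Q₀^{1/2}(I − Q₀)^{1/2} y , Q₀^{1/2}(I − Q₀)^{1/2} x + (I − Q₀) y ) is an orthogonal projection, i.e. Q = Q* = Q². -/
/-!
Put `A = √Q₀` and `B = √(I - Q₀)`. These are commuting self-adjoint operators with
`A² + B² = I`, so the column operator `V x = (A x, B x)` is an isometry `K → K × K`, and
`Q = V V*`. The range projection `V V*` of an isometry is an orthogonal projection.
-/

open ContinuousLinearMap
open scoped InnerProduct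

lemma CFC.commute_sqrt_sqrt_one_sub {A : Type*} [CStarAlgebra A] [PartialOrder A]
    [StarOrderedRing A] (a : A) : Commute (CFC.sqrt a) (CFC.sqrt (1 - a)) := by
  have h : Commute (1 - a) a := (Commute.one_left a).sub_left (Commute.refl a)
  rw [CFC.sqrt_eq_cfc, CFC.sqrt_eq_cfc]
  exact (h.cfc_nnreal _).symm.cfc_nnreal _

namespace ContinuousLinearMap

variable {𝕜 E F G : Type*} [RCLike 𝕜]
  [NormedAddCommGroup E] [InnerProductSpace 𝕜 E]
  [NormedAddCommGroup F] [InnerProductSpace 𝕜 F]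
  [NormedAddCommGroup G] [InnerProductSpace 𝕜 G]

def prodL2 (A : E →L[𝕜] F) (B : E →L[𝕜] G) : E →L[𝕜] WithLp 2 (F × G) :=
  (WithLp.prodContinuousLinearEquiv 2 𝕜 F G).symm.toContinuousLinearMap ∘L A.prod B

@[simp]
theorem prodL2_apply (A : E →L[𝕜] F) (B : E →L[𝕜] G) (x : E) :
    prodL2 A B x = WithLp.toLp 2 (A x, B x) := rfl

variable [CompleteSpace E] [CompleteSpace F] [CompleteSpace G]

theorem adjoint_prodL2 (A : E →L[𝕜] F) (B : E →L[𝕜] G) :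
    (prodL2 A B)† = A† ∘L WithLp.fstL 2 𝕜 F G + B† ∘L WithLp.sndL 2 𝕜 F G := by
  refine ((eq_adjoint_iff _ _).mpr fun p x => ?_).symm
  simp [WithLp.prod_inner_apply, inner_add_left, adjoint_inner_left]

theorem adjoint_prodL2_comp_prodL2 (A : E →L[𝕜] F) (B : E →L[𝕜] G) :
    (prodL2 A B)† ∘L prodL2 A B = A† ∘L A + B† ∘L B := by
  ext x
  simp [adjoint_prodL2]

theorem isStarProjection_self_comp_adjoint {V : E →L[𝕜] F} (hV : V† ∘L V = .id 𝕜 E) :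
    IsStarProjection (V ∘L V†) where
  isIdempotentElem := by
    rw [IsIdempotentElem, mul_def, comp_assoc, ← comp_assoc (V†), hV, id_comp]
  isSelfAdjoint := by
    rw [isSelfAdjoint_iff', adjoint_comp, adjoint_adjoint]

end ContinuousLinearMap

theorem block_is_orthogonal_projection_general
    {K : Type*} [NormedAddCommGroup K] [InnerProductSpace ℂ K] [CompleteSpace K]
    (Q₀ : K →L[ℂ] K) (hpos : 0 ≤ Q₀) (hc : ‖Q₀‖ ≤ 1)
    (Q : WithLp 2 (K × K) →L[ℂ] WithLp 2 (K × K))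
    (hQ : ∀ x y : K,
      Q ((WithLp.equiv 2 (K × K)).symm (x, y)) =
        (WithLp.equiv 2 (K × K)).symm
          (Q₀ x + (CFC.sqrt Q₀) ((CFC.sqrt (1 - Q₀)) y),
           (CFC.sqrt Q₀) ((CFC.sqrt (1 - Q₀)) x) + (1 - Q₀) y)) :
    IsSelfAdjoint Q ∧ Q * Q = Q := by
  set A := CFC.sqrt Q₀
  set B := CFC.sqrt (1 - Q₀)
  have hQ₀_le_one : Q₀ ≤ 1 := (CStarAlgebra.norm_le_one_iff_of_nonneg Q₀).mp hc
  have hAA : A * A = Q₀ := CFC.sqrt_mul_sqrt_self Q₀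
  have hBB : B * B = 1 - Q₀ := CFC.sqrt_mul_sqrt_self _ (sub_nonneg.mpr hQ₀_le_one)
  have hA : A† = A := (CFC.sqrt_nonneg Q₀).isSelfAdjoint.adjoint_eq
  have hB : B† = B := (CFC.sqrt_nonneg (1 - Q₀)).isSelfAdjoint.adjoint_eq
  have hAA' (v : K) : A (A v) = Q₀ v := congr($hAA v)
  have hBB' (v : K) : B (B v) = (1 - Q₀) v := congr($hBB v)
  have hBA' (v : K) : B (A v) = A (B v) := congr($((CFC.commute_sqrt_sqrt_one_sub Q₀).symm.eq) v)
  have hQ_eq : Q = prodL2 A B ∘L (prodL2 A B)† := by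
    ext1 z
    obtain ⟨⟨x, y⟩, rfl⟩ := (WithLp.equiv 2 (K × K)).symm.surjective z
    rw [hQ, comp_apply, adjoint_prodL2, hA, hB]
    simp only [WithLp.equiv_symm_apply, add_apply, comp_apply, WithLp.fstL_apply,
      WithLp.toLp_fst, WithLp.sndL_apply, WithLp.toLp_snd, prodL2_apply, map_add, hAA', hBB',
      hBA', ← WithLp.toLp_add, Prod.mk_add_mk]
  have hV : (prodL2 A B)† ∘L prodL2 A B = .id ℂ K := by
    rw [adjoint_prodL2_comp_prodL2, hA, hB]
    change A * A + B * B = 1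
    rw [hAA, hBB, add_sub_cancel]
  have hP := isStarProjection_self_comp_adjoint hV
  rw [hQ_eq]
  exact ⟨hP.isSelfAdjoint, hP.isIdempotentElem⟩

/-- For a positive contraction `Q₀` on a complex Hilbert space `K`, the block operator
`Q(x, y) = (Q₀x + Q₀^{1/2}(I - Q₀)^{1/2}y, Q₀^{1/2}(I - Q₀)^{1/2}x + (I - Q₀)y)`
on `K × K` is an orthogonal projection. -/
theorem block_is_orthogonal_projection
    {K : Type*} [NormedAddCommGroup K] [InnerProductSpace ℂ K] [CompleteSpace K]
    (Q₀ : K →L[ℂ] K) (hsa : IsSelfAdjoint Q₀) (hpos : 0 ≤ Q₀) (hc : ‖Q₀‖ ≤ 1)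
    (Q : WithLp 2 (K × K) →L[ℂ] WithLp 2 (K × K))
    (hQ : ∀ x y : K,
      Q ((WithLp.equiv 2 (K × K)).symm (x, y)) =
        (WithLp.equiv 2 (K × K)).symm
          (Q₀ x + (CFC.sqrt Q₀) ((CFC.sqrt (1 - Q₀)) y),
           (CFC.sqrt Q₀) ((CFC.sqrt (1 - Q₀)) x) + (1 - Q₀) y)) :
    IsSelfAdjoint Q ∧ Q * Q = Q :=
  block_is_orthogonal_projection_general Q₀ hpos hc Q hQ
end

section
/- There exist orthogonal projections P and Q on the complex Hilbert space H = ℓ²(ℕ, ℂ) × ℓ²(ℕ, ℂ) such that σ(PQ + QP) = [−1/4, 2]. -/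
/-!
Both projections are ℓ²-direct sums over `i` of projections of `ℂ²` onto lines: `P` onto
`ℂ (1, 0)` and `Q` onto `ℂ (cos θᵢ, sin θᵢ)`. In the `i`-th copy of `ℂ²` the bisector
`(cos (θᵢ/2), sin (θᵢ/2))` is an eigenvector of `P + Q` with eigenvalue `1 + cos θᵢ`, so for a
dense sequence `θ` the spectrum of `P + Q` contains `[0, 2]`; since `0 ≤ P + Q ≤ 2` it equals
`[0, 2]`. As `PQ + QP = (P + Q)² - (P + Q)`, spectral mapping gives
`σ(PQ + QP) = {t² - t | t ∈ [0, 2]} = [-1/4, 2]`.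
-/

open ContinuousLinearMap Set
open scoped lp InnerProduct InnerProductSpace Polynomial

theorem range_one_add_cos : (range fun x => 1 + Real.cos x) = Icc 0 2 := by
  rw [show (range fun x => 1 + Real.cos x) = range ((1 + ·) ∘ Real.cos) from rfl, range_comp,
    Real.range_cos, image_const_add_Icc]
  norm_num

theorem image_sq_sub_self_Icc_zero_two :
    (fun t : ℝ => t ^ 2 - t) '' Icc 0 2 = Icc (-(1 / 4)) 2 := by
  ext y
  simp only [mem_image, mem_Icc]
  constructor
  · rintro ⟨t, ⟨h0, h2⟩, rfl⟩
    constructor <;> nlinarith [sq_nonneg (t - 1 / 2)]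
  · rintro ⟨h1, h2⟩
    have hy : 0 ≤ y + 1 / 4 := by linarith
    have hsq := Real.sq_sqrt hy
    have hnonneg := Real.sqrt_nonneg (y + 1 / 4)
    exact ⟨1 / 2 + √(y + 1 / 4), ⟨by linarith, by nlinarith⟩, by nlinarith⟩

theorem IsIdempotentElem.mul_add_mul_eq {R : Type*} [Ring R] {p q : R}
    (hp : IsIdempotentElem p) (hq : IsIdempotentElem q) :
    p * q + q * p = (p + q) ^ 2 - (p + q) := by
  rw [sq, add_mul, mul_add, mul_add, hp.eq, hq.eq]
  abel

theorem IsStarProjection.spectrum_add_subset {A : Type*} [CStarAlgebra A] [PartialOrder A]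
    [StarOrderedRing A] {p q : A} (hp : IsStarProjection p) (hq : IsStarProjection q) :
    spectrum ℂ (p + q) ⊆ ((↑) : ℝ → ℂ) '' Icc 0 2 := by
  have hsa : IsSelfAdjoint (p + q) := hp.isSelfAdjoint.add hq.isSelfAdjoint
  have hle : p + q ≤ algebraMap ℝ A 2 := by
    rw [map_ofNat, ← one_add_one_eq_two]
    exact add_le_add hp.le_one hq.le_one
  rw [← hsa.spectrumRestricts.algebraMap_image]
  exact image_mono fun x hx =>
    ⟨spectrum_nonneg_of_nonneg (add_nonneg hp.nonneg hq.nonneg) hx,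
      (le_algebraMap_iff_spectrum_le (ha := hsa)).mp hle x hx⟩

theorem ContinuousLinearMap.mem_spectrum_of_apply_eq_smul {𝕜 E : Type*}
    [NontriviallyNormedField 𝕜] [NormedAddCommGroup E] [NormedSpace 𝕜 E] [CompleteSpace E]
    {T : E →L[𝕜] E} {μ : 𝕜} {v : E} (hv : v ≠ 0) (h : T v = μ • v) : μ ∈ spectrum 𝕜 T := by
  rw [spectrum_eq]
  exact Module.End.HasEigenvalue.mem_spectrum
    (Module.End.hasEigenvalue_of_hasEigenvector ⟨Module.End.mem_eigenspace_iff.2 h, hv⟩)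

theorem ContinuousLinearMap.isStarProjection_comp_adjoint {𝕜 E F : Type*} [RCLike 𝕜]
    [NormedAddCommGroup E] [InnerProductSpace 𝕜 E] [CompleteSpace E]
    [NormedAddCommGroup F] [InnerProductSpace 𝕜 F] [CompleteSpace F]
    {V : E →L[𝕜] F} (hV : V† ∘L V = 1) : IsStarProjection (V ∘L V†) where
  isIdempotentElem :=
    calc (V ∘L V†) ∘L (V ∘L V†) = V ∘L (V† ∘L V) ∘L V† := by simp only [comp_assoc]
      _ = V ∘L V† := by rw [hV, one_def, id_comp]
  isSelfAdjoint := by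
    rw [isSelfAdjoint_iff', adjoint_comp, adjoint_adjoint]

noncomputable section

variable {ι : Type*}

def mulOp (a : ι → ℝ) (ha : ∀ i, |a i| ≤ 1) : ℓ²(ι, ℂ) →L[ℂ] ℓ²(ι, ℂ) :=
  have hle (f : ℓ²(ι, ℂ)) (i : ι) : ‖(a i : ℂ) * f i‖ ≤ ‖f i‖ := by
    rw [norm_mul, Complex.norm_real, Real.norm_eq_abs]
    exact mul_le_of_le_one_left (norm_nonneg _) (ha i)
  LinearMap.mkContinuous
    { toFun f := ⟨fun i => a i * f i, (lp.memℓp f).mono' (hle f)⟩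
      map_add' f g := lp.ext <| funext fun i => mul_add _ _ _
      map_smul' c f := lp.ext <| funext fun i => mul_left_comm _ _ _ }
    1 fun f => by rw [one_mul]; exact lp.norm_mono two_ne_zero (hle f)

section mulOp

variable (a : ι → ℝ) (ha : ∀ i, |a i| ≤ 1)

@[simp] theorem mulOp_apply (f : ℓ²(ι, ℂ)) (i : ι) : mulOp a ha f i = a i * f i := rfl

theorem inner_mulOp_left (f g : ℓ²(ι, ℂ)) :
    ⟪mulOp a ha f, g⟫_ℂ = ⟪f, mulOp a ha g⟫_ℂ := by
  simp only [lp.inner_eq_tsum, mulOp_apply, RCLike.inner_apply, map_mul, Complex.conj_ofReal]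
  exact tsum_congr fun i => by ring

theorem mulOp_single [DecidableEq ι] (i : ι) (x : ℂ) :
    mulOp a ha (lp.single 2 i x) = lp.single 2 i ((a i : ℂ) * x) := by
  ext j
  by_cases hj : j = i
  · subst hj; simp
  · simp [hj]

end mulOp

def cosOp (θ : ι → ℝ) : ℓ²(ι, ℂ) →L[ℂ] ℓ²(ι, ℂ) :=
  mulOp (fun i => Real.cos (θ i)) fun _ => Real.abs_cos_le_one _

def sinOp (θ : ι → ℝ) : ℓ²(ι, ℂ) →L[ℂ] ℓ²(ι, ℂ) :=
  mulOp (fun i => Real.sin (θ i)) fun _ => Real.abs_sin_le_one _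

theorem cosOp_zero : cosOp (0 : ι → ℝ) = 1 := by
  ext f i
  simp [cosOp]

theorem cosOp_single [DecidableEq ι] (θ : ι → ℝ) (i : ι) (x : ℂ) :
    cosOp θ (lp.single 2 i x) = (Real.cos (θ i) : ℂ) • lp.single 2 i x := by
  rw [cosOp, mulOp_single, ← smul_eq_mul, lp.single_smul]

def tilt (θ : ι → ℝ) : ℓ²(ι, ℂ) →L[ℂ] WithLp 2 (ℓ²(ι, ℂ) × ℓ²(ι, ℂ)) :=
  (WithLp.prodContinuousLinearEquiv 2 ℂ _ _).symm.toContinuousLinearMap ∘L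
    (cosOp θ).prod (sinOp θ)

theorem tilt_apply (θ : ι → ℝ) (f : ℓ²(ι, ℂ)) :
    tilt θ f = WithLp.toLp 2 (cosOp θ f, sinOp θ f) := rfl

theorem adjoint_tilt (θ : ι → ℝ) :
    (tilt θ)† = (cosOp θ).coprod (sinOp θ) ∘L
      (WithLp.prodContinuousLinearEquiv 2 ℂ _ _).toContinuousLinearMap := by
  refine ((eq_adjoint_iff _ _).mpr fun u f => ?_).symm
  simp only [comp_apply, coprod_apply, ContinuousLinearEquiv.coe_coe, inner_add_left,
    WithLp.prod_inner_apply, tilt_apply, cosOp, sinOp, inner_mulOp_left]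
  rfl

theorem adjoint_tilt_comp_tilt (ψ φ : ι → ℝ) : (tilt ψ)† ∘L tilt φ = cosOp (ψ - φ) := by
  ext f i
  simp only [adjoint_tilt, comp_apply, coprod_apply, ContinuousLinearEquiv.coe_coe, tilt_apply]
  simp [cosOp, sinOp, Real.cos_sub]
  ring

theorem tilt_injective (θ : ι → ℝ) : Function.Injective (tilt θ) := by
  intro f g h
  simpa [← comp_apply ((tilt θ)†), adjoint_tilt_comp_tilt, cosOp_zero] using
    congrArg ((tilt θ)†) h

theorem tilt_zero_add_tilt (θ : ι → ℝ) (f : ℓ²(ι, ℂ)) :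
    tilt 0 f + tilt θ f = (2 : ℂ) • tilt (θ / 2) (cosOp (θ / 2) f) := by
  have hcos (z : ℂ) : Complex.cos z = 2 * Complex.cos (z / 2) ^ 2 - 1 := by
    rw [← Complex.cos_two_mul, mul_div_cancel₀ _ two_ne_zero]
  have hsin (z : ℂ) : Complex.sin z = 2 * Complex.sin (z / 2) * Complex.cos (z / 2) := by
    rw [← Complex.sin_two_mul, mul_div_cancel₀ _ two_ne_zero]
  refine WithLp.ofLp_injective 2 (Prod.ext ?_ ?_) <;> ext i <;> simp [tilt_apply, cosOp, sinOp]
  · linear_combination f i * hcos (θ i)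
  · linear_combination f i * hsin (θ i)

def tiltProj (θ : ι → ℝ) :
    WithLp 2 (ℓ²(ι, ℂ) × ℓ²(ι, ℂ)) →L[ℂ] WithLp 2 (ℓ²(ι, ℂ) × ℓ²(ι, ℂ)) :=
  tilt θ ∘L (tilt θ)†

theorem isStarProjection_tiltProj (θ : ι → ℝ) : IsStarProjection (tiltProj θ) :=
  isStarProjection_comp_adjoint <| by rw [adjoint_tilt_comp_tilt, sub_self, cosOp_zero]

theorem tiltProj_apply_tilt (ψ φ : ι → ℝ) (f : ℓ²(ι, ℂ)) :
    tiltProj ψ (tilt φ f) = tilt ψ (cosOp (ψ - φ) f) := by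
  rw [tiltProj, comp_apply, ← comp_apply ((tilt ψ)†), adjoint_tilt_comp_tilt]

theorem tiltProj_zero_add_tiltProj_apply_tilt_half [DecidableEq ι] (θ : ι → ℝ) (i : ι) :
    (tiltProj 0 + tiltProj θ : WithLp 2 (ℓ²(ι, ℂ) × ℓ²(ι, ℂ)) →L[ℂ] _)
        (tilt (θ / 2) (lp.single 2 i 1)) =
      ((1 + Real.cos (θ i) : ℝ) : ℂ) • tilt (θ / 2) (lp.single 2 i 1) := by
  set c : ℂ := (Real.cos (θ i / 2) : ℂ)
  have h0 : cosOp (0 - θ / 2) (lp.single 2 i 1) = c • lp.single 2 i 1 := by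
    simp [cosOp_single, c]
  have hθ : cosOp (θ - θ / 2) (lp.single 2 i 1) = c • lp.single 2 i 1 := by
    simp [cosOp_single, c, sub_half]
  have hc : c * 2 * c = ((1 + Real.cos (θ i) : ℝ) : ℂ) := by
    have h := Real.cos_two_mul (θ i / 2)
    rw [mul_div_cancel₀ _ two_ne_zero] at h
    simp only [c, h]
    push_cast
    ring
  rw [add_apply, tiltProj_apply_tilt, tiltProj_apply_tilt, h0, hθ, map_smul, map_smul,
    ← smul_add, tilt_zero_add_tilt, cosOp_single, map_smul, smul_smul, smul_smul]
  exact congrArg (· • _) hc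

theorem one_add_cos_mem_spectrum [DecidableEq ι] (θ : ι → ℝ) (i : ι) :
    ((1 + Real.cos (θ i) : ℝ) : ℂ) ∈ spectrum ℂ (tiltProj 0 + tiltProj θ) := by
  have hsingle : (lp.single 2 i 1 : ℓ²(ι, ℂ)) ≠ 0 := by
    rw [← norm_ne_zero_iff, lp.norm_single (by norm_num), norm_one]
    exact one_ne_zero
  exact mem_spectrum_of_apply_eq_smul ((map_ne_zero_iff _ (tilt_injective _)).mpr hsingle)
    (tiltProj_zero_add_tiltProj_apply_tilt_half θ i)

theorem spectrum_tiltProj_zero_add_tiltProj {θ : ι → ℝ} (hθ : DenseRange θ) :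
    spectrum ℂ (tiltProj 0 + tiltProj θ) = ((↑) : ℝ → ℂ) '' Icc 0 2 := by
  classical
  refine ((isStarProjection_tiltProj 0).spectrum_add_subset
    (isStarProjection_tiltProj θ)).antisymm ?_
  have hclosed : IsClosed (((↑) : ℝ → ℂ) ⁻¹' spectrum ℂ (tiltProj 0 + tiltProj θ)) :=
    (spectrum.isClosed _).preimage Complex.continuous_ofReal
  rw [image_subset_iff, ← range_one_add_cos, ← image_univ, ← hθ.closure_range]
  calc _ ⊆ closure ((fun x => 1 + Real.cos x) '' range θ) :=
        image_closure_subset_closure_image (by fun_prop)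
    _ ⊆ _ := hclosed.closure_subset_iff.mpr <| by
        rintro _ ⟨_, ⟨i, rfl⟩, rfl⟩
        exact one_add_cos_mem_spectrum θ i

end

/-- There exist orthogonal projections `P, Q` on `ℓ²(ℕ, ℂ) × ℓ²(ℕ, ℂ)` with
`σ(PQ + QP) = [-1/4, 2]`. -/
theorem exists_projections_spectrum_anticommutator_eq_Icc :
    ∃ P Q : WithLp 2 (lp (fun _ : ℕ => ℂ) 2 × lp (fun _ : ℕ => ℂ) 2) →L[ℂ]
        WithLp 2 (lp (fun _ : ℕ => ℂ) 2 × lp (fun _ : ℕ => ℂ) 2),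
      IsSelfAdjoint P ∧ P * P = P ∧ IsSelfAdjoint Q ∧ Q * Q = Q ∧
      spectrum ℂ (P * Q + Q * P) = Complex.ofReal '' Set.Icc (-(1/4) : ℝ) 2 := by
  obtain ⟨hP, hPsa⟩ := isStarProjection_tiltProj (0 : ℕ → ℝ)
  obtain ⟨hQ, hQsa⟩ := isStarProjection_tiltProj (TopologicalSpace.denseSeq ℝ)
  refine ⟨_, _, hPsa, hP, hQsa, hQ, ?_⟩
  set S := tiltProj 0 + tiltProj (TopologicalSpace.denseSeq ℝ)
  have hS : spectrum ℂ S = ((↑) : ℝ → ℂ) '' Icc 0 2 :=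
    spectrum_tiltProj_zero_add_tiltProj (TopologicalSpace.denseRange_denseSeq ℝ)
  have hne : (spectrum ℂ S).Nonempty := hS ▸ (nonempty_Icc.mpr zero_le_two).image _
  have haeval : S ^ 2 - S = Polynomial.aeval S (Polynomial.X ^ 2 - Polynomial.X : ℂ[X]) := by
    simp
  rw [hP.mul_add_mul_eq hQ, haeval, spectrum.map_polynomial_aeval_of_nonempty _ _ hne, hS,
    ← image_sq_sub_self_Icc_zero_two, image_image, image_image]
  exact image_congr fun t _ => by simp
end

section
/- Let K be a complex Hilbert space and let Q₀ be a positive contraction on K with σ(Q₀) = [0, 1]. Set H = K × K, let P be the orthogonal projection P(x, y) = (x, 0), and let Q be the block operator Q(x, y) = ( Q₀x + Q₀^{1/2}(I − Q₀)^{1/2} y , Q₀^{1/2}(I − Q₀)^{1/2} x + (I − Q₀) y ). Then σ(PQ + QP) = [−1/4, 2]. -/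
/-!
With `R = Q₀^{1/2}(I - Q₀)^{1/2}`, the operator `PQ + QP` has block matrix `[[2Q₀, R], [R, 0]]`,
which is `B² + B` for `B = [[Q₀, R], [R, -Q₀]]`. Since `R` commutes with `Q₀` and
`R² = Q₀ - Q₀²`, `B² = Q₀ ⊕ Q₀` has spectrum `[0, 1]`; conjugating by `[[0, 1], [-1, 0]]` turns
`B` into `-B`, so `σ(B)` is symmetric and therefore equals `[-1, 1]`. The spectral mapping theorem
for `z ↦ z² + z` then gives `σ(PQ + QP) = [-1/4, 2]`.
-/

section Sqrt

variable {A : Type*} [CStarAlgebra A] [PartialOrder A] [StarOrderedRing A]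

lemma Commute.sqrt_right {a b : A} (h : Commute a b) : Commute a (CFC.sqrt b) := by
  rw [CFC.sqrt_eq_cfc]
  exact (h.symm.cfc_nnreal _).symm

lemma Commute.sqrt_mul_sqrt_right {a b c : A} (ha : Commute c a) (hb : Commute c b) :
    Commute c (CFC.sqrt a * CFC.sqrt b) :=
  ha.sqrt_right.mul_right hb.sqrt_right

lemma Commute.sqrt_mul_sqrt_mul_self {a b : A} (h : Commute a b) (ha : 0 ≤ a) (hb : 0 ≤ b) :
    CFC.sqrt a * CFC.sqrt b * (CFC.sqrt a * CFC.sqrt b) = a * b := by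
  have hsqrt : Commute (CFC.sqrt a) (CFC.sqrt b) := h.symm.sqrt_right.symm.sqrt_right
  rw [hsqrt.symm.mul_mul_mul_comm, CFC.sqrt_mul_sqrt_self a, CFC.sqrt_mul_sqrt_self b]

end Sqrt

lemma spectrum.neg_eq_of_isUnit_of_mul_eq_neg_mul {R A : Type*} [CommSemiring R] [Ring A]
    [Algebra R A] {a u : A} (hu : IsUnit u) (h : u * a = -a * u) :
    spectrum R (-a) = spectrum R a := by
  obtain ⟨u, rfl⟩ := hu
  calc spectrum R (-a) = spectrum R (u * a * ↑u⁻¹) := by rw [h, Units.mul_inv_cancel_right]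
    _ = spectrum R a := spectrum.units_conjugate

lemma spectrum.map_sq_add_self {𝕜 A : Type*} [Field 𝕜] [IsAlgClosed 𝕜] [Ring A]
    [Algebra 𝕜 A] (a : A) : spectrum 𝕜 (a ^ 2 + a) = (fun z ↦ z ^ 2 + z) '' spectrum 𝕜 a := by
  open Polynomial in
  have hdeg : (X ^ 2 + X : 𝕜[X]).degree = 2 := by compute_degree!
  have h := spectrum.map_polynomial_aeval_of_degree_pos a (X ^ 2 + X : 𝕜[X]) (by rw [hdeg]; decide)
  simpa only [map_add, map_pow, aeval_X, eval_add, eval_pow, eval_X] using h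

lemma Complex.eq_ofReal_Icc_of_neg_eq_of_image_sq {S : Set ℂ} {r : ℝ} (hr : 0 ≤ r)
    (hneg : -S = S) (hsq : (· ^ 2) '' S = Complex.ofReal '' Set.Icc 0 (r ^ 2)) :
    S = Complex.ofReal '' Set.Icc (-r) r := by
  ext z
  constructor
  · intro hz
    obtain ⟨s, ⟨hs₀, hs₁⟩, hs⟩ : z ^ 2 ∈ Complex.ofReal '' Set.Icc 0 (r ^ 2) := hsq ▸ ⟨z, hz, rfl⟩
    have ht₀ : 0 ≤ √s := Real.sqrt_nonneg s
    have htr : √s ≤ r := Real.sqrt_le_iff.2 ⟨hr, hs₁⟩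
    have hzt : z ^ 2 = (√s : ℂ) ^ 2 := by rw [← hs, ← Complex.ofReal_pow, Real.sq_sqrt hs₀]
    rcases sq_eq_sq_iff_eq_or_eq_neg.1 hzt with rfl | rfl
    · exact ⟨√s, ⟨by linarith, htr⟩, rfl⟩
    · exact ⟨-√s, ⟨by linarith, by linarith⟩, Complex.ofReal_neg _⟩
  · rintro ⟨t, ⟨ht₁, ht₂⟩, rfl⟩
    obtain ⟨z, hz, hzt⟩ : (t : ℂ) ^ 2 ∈ (· ^ 2) '' S :=
      hsq ▸ ⟨t ^ 2, ⟨sq_nonneg t, sq_le_sq' ht₁ ht₂⟩, Complex.ofReal_pow t 2⟩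
    rcases sq_eq_sq_iff_eq_or_eq_neg.1 hzt with rfl | rfl
    · exact hz
    · rw [← hneg]
      simpa using hz

lemma image_sq_add_self_Icc_neg_one_one :
    (fun x : ℝ ↦ x ^ 2 + x) '' Set.Icc (-1) 1 = Set.Icc (-(1 / 4)) 2 := by
  refine subset_antisymm ?_ fun y hy ↦ ?_
  · rintro _ ⟨x, ⟨hx₁, hx₂⟩, rfl⟩
    exact ⟨by nlinarith [sq_nonneg (x + 1 / 2)], by nlinarith⟩
  · obtain ⟨x, hx, rfl⟩ := intermediate_value_Icc (by norm_num : (-(1 / 2) : ℝ) ≤ 1)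
      (by fun_prop : Continuous fun x : ℝ ↦ x ^ 2 + x).continuousOn (by norm_num at hy ⊢; exact hy)
    exact ⟨x, ⟨by linarith [hx.1], hx.2⟩, rfl⟩

section Block

open WithLp

variable {𝕜 E : Type*} [NontriviallyNormedField 𝕜] [NormedAddCommGroup E] [NormedSpace 𝕜 E]
  {p : ENNReal}

variable (p) in
noncomputable def blockCLM (a b c d : E →L[𝕜] E) : WithLp p (E × E) →L[𝕜] WithLp p (E × E) :=
  ((prodContinuousLinearEquiv p 𝕜 E E).symm : E × E →L[𝕜] WithLp p (E × E)) ∘L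
    (a.coprod b).prod (c.coprod d) ∘L
      (prodContinuousLinearEquiv p 𝕜 E E : WithLp p (E × E) →L[𝕜] E × E)

@[simp]
lemma blockCLM_apply_toLp (a b c d : E →L[𝕜] E) (x y : E) :
    blockCLM p a b c d (toLp p (x, y)) = toLp p (a x + b y, c x + d y) :=
  rfl

lemma eq_blockCLM_iff {T : WithLp p (E × E) →L[𝕜] WithLp p (E × E)} {a b c d : E →L[𝕜] E} :
    T = blockCLM p a b c d ↔ ∀ x y, T (toLp p (x, y)) = toLp p (a x + b y, c x + d y) := by
  refine ⟨fun h x y ↦ by simp [h], fun h ↦ ContinuousLinearMap.ext fun z ↦ ?_⟩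
  rw [← toLp_ofLp p z, h, blockCLM_apply_toLp]

lemma blockCLM_mul (a b c d a' b' c' d' : E →L[𝕜] E) :
    blockCLM p a b c d * blockCLM p a' b' c' d' =
      blockCLM p (a * a' + b * c') (a * b' + b * d') (c * a' + d * c') (c * b' + d * d') :=
  eq_blockCLM_iff.2 fun x y ↦ by rw [WithLp.ext_iff]; ext <;> simp <;> abel

lemma blockCLM_one : blockCLM p (1 : E →L[𝕜] E) 0 0 1 = 1 :=
  (eq_blockCLM_iff.2 fun x y ↦ by simp).symm

lemma blockCLM_mul_self_of_commute {a r : E →L[𝕜] E} (h : Commute a r) :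
    blockCLM p a r r (-a) * blockCLM p a r r (-a) =
      blockCLM p (a * a + r * r) 0 0 (a * a + r * r) := by
  simp only [blockCLM_mul, neg_mul, mul_neg, h.eq]
  congr 1 <;> abel

variable [Fact (1 ≤ p)]

lemma blockCLM_add (a b c d a' b' c' d' : E →L[𝕜] E) :
    blockCLM p a b c d + blockCLM p a' b' c' d' = blockCLM p (a + a') (b + b') (c + c') (d + d') :=
  eq_blockCLM_iff.2 fun x y ↦ by rw [WithLp.ext_iff]; ext <;> simp <;> abel

lemma blockCLM_neg (a b c d : E →L[𝕜] E) :
    -blockCLM p a b c d = blockCLM p (-a) (-b) (-c) (-d) :=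
  eq_blockCLM_iff.2 fun x y ↦ by rw [WithLp.ext_iff]; ext <;> simp <;> abel

lemma algebraMap_eq_blockCLM (k : 𝕜) :
    algebraMap 𝕜 (WithLp p (E × E) →L[𝕜] WithLp p (E × E)) k =
      blockCLM p (algebraMap 𝕜 _ k) 0 0 (algebraMap 𝕜 _ k) :=
  eq_blockCLM_iff.2 fun x y ↦ by simp [Algebra.algebraMap_eq_smul_one, ← toLp_smul]

lemma neg_spectrum_blockCLM (a b : E →L[𝕜] E) :
    -spectrum 𝕜 (blockCLM p a b b (-a)) = spectrum 𝕜 (blockCLM p a b b (-a)) := by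
  set J : WithLp p (E × E) →L[𝕜] WithLp p (E × E) := blockCLM p 0 1 (-1) 0
  have hJJ : J * -J = 1 ∧ -J * J = 1 := by
    simp only [J, blockCLM_neg, blockCLM_mul, ← blockCLM_one]
    constructor <;> congr 1 <;> noncomm_ring
  rw [spectrum.neg_eq]
  refine spectrum.neg_eq_of_isUnit_of_mul_eq_neg_mul ⟨⟨J, -J, hJJ.1, hJJ.2⟩, rfl⟩ ?_
  simp only [J, blockCLM_neg, blockCLM_mul]
  congr 1 <;> noncomm_ring

variable [CompleteSpace E]

lemma isUnit_blockCLM_diag_iff {a : E →L[𝕜] E} : IsUnit (blockCLM p a 0 0 a) ↔ IsUnit a := by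
  have h : ⇑(blockCLM p a 0 0 a) =
      (WithLp.equiv p (E × E)).symm ∘ Prod.map a a ∘ WithLp.equiv p (E × E) := by
    funext z
    obtain ⟨⟨x, y⟩⟩ := z
    simp
  rw [ContinuousLinearMap.isUnit_iff_bijective, ContinuousLinearMap.isUnit_iff_bijective, h,
    Equiv.comp_bijective, Equiv.bijective_comp, Prod.map_bijective, and_self]

lemma spectrum_blockCLM_diag (a : E →L[𝕜] E) : spectrum 𝕜 (blockCLM p a 0 0 a) = spectrum 𝕜 a := by
  ext k
  rw [spectrum.mem_iff, spectrum.mem_iff, algebraMap_eq_blockCLM, sub_eq_add_neg, blockCLM_neg,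
    blockCLM_add, neg_zero, add_zero, ← sub_eq_add_neg, isUnit_blockCLM_diag_iff]

end Block

theorem spectrum_anticommutator_eq_Icc_general
    {K : Type*} [NormedAddCommGroup K] [InnerProductSpace ℂ K] [CompleteSpace K]
    (Q₀ : K →L[ℂ] K) (hpos : 0 ≤ Q₀) (hc : ‖Q₀‖ ≤ 1)
    (hspec : spectrum ℂ Q₀ = Complex.ofReal '' Set.Icc (0 : ℝ) 1)
    (P Q : WithLp 2 (K × K) →L[ℂ] WithLp 2 (K × K))
    (hP : ∀ x y : K,
      P ((WithLp.equiv 2 (K × K)).symm (x, y)) = (WithLp.equiv 2 (K × K)).symm (x, 0))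
    (hQ : ∀ x y : K,
      Q ((WithLp.equiv 2 (K × K)).symm (x, y)) =
        (WithLp.equiv 2 (K × K)).symm
          (Q₀ x + (CFC.sqrt Q₀) ((CFC.sqrt (1 - Q₀)) y),
           (CFC.sqrt Q₀) ((CFC.sqrt (1 - Q₀)) x) + (1 - Q₀) y)) :
    spectrum ℂ (P * Q + Q * P) = Complex.ofReal '' Set.Icc (-(1/4) : ℝ) 2 := by
  set R := CFC.sqrt Q₀ * CFC.sqrt (1 - Q₀)
  have hcomm : Commute Q₀ (1 - Q₀) := (Commute.one_right Q₀).sub_right (Commute.refl Q₀)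
  have hRR : Q₀ * Q₀ + R * R = Q₀ := by
    rw [hcomm.sqrt_mul_sqrt_mul_self hpos
      (sub_nonneg.2 ((CStarAlgebra.norm_le_one_iff_of_nonneg Q₀).1 hc)), mul_sub, mul_one,
      add_sub_cancel]
  have hP' : P = blockCLM 2 1 0 0 0 := eq_blockCLM_iff.2 fun x y ↦ by simpa using hP x y
  have hQ' : Q = blockCLM 2 Q₀ R R (1 - Q₀) := eq_blockCLM_iff.2 fun x y ↦ by simpa [R] using hQ x y
  set B := blockCLM 2 Q₀ R R (-Q₀)
  have hBB : B ^ 2 = blockCLM 2 Q₀ 0 0 Q₀ := by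
    rw [sq, blockCLM_mul_self_of_commute ((Commute.refl Q₀).sqrt_mul_sqrt_right hcomm), hRR]
  have hA : P * Q + Q * P = B ^ 2 + B := by
    rw [hBB, hP', hQ', blockCLM_mul, blockCLM_mul, blockCLM_add, blockCLM_add]
    congr 1 <;> noncomm_ring
  have hB : spectrum ℂ B = Complex.ofReal '' Set.Icc (-1) 1 := by
    refine Complex.eq_ofReal_Icc_of_neg_eq_of_image_sq zero_le_one (neg_spectrum_blockCLM Q₀ R) ?_
    rw [← spectrum.map_pow_of_pos B two_pos, hBB, spectrum_blockCLM_diag, hspec, one_pow]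
  rw [hA, spectrum.map_sq_add_self, hB, Set.image_image,
    ← image_sq_add_self_Icc_neg_one_one, Set.image_image]
  simp only [Complex.ofReal_add, Complex.ofReal_pow]

/-- If `Q₀` is a positive contraction on `K` with `σ(Q₀) = [0, 1]`, `P(x, y) = (x, 0)` and
`Q(x, y) = (Q₀x + Q₀^{1/2}(I - Q₀)^{1/2}y, Q₀^{1/2}(I - Q₀)^{1/2}x + (I - Q₀)y)` on `K × K`,
then `σ(PQ + QP) = [-1/4, 2]`. -/
theorem spectrum_anticommutator_eq_Icc
    {K : Type*} [NormedAddCommGroup K] [InnerProductSpace ℂ K] [CompleteSpace K]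
    (Q₀ : K →L[ℂ] K) (hsa : IsSelfAdjoint Q₀) (hpos : 0 ≤ Q₀) (hc : ‖Q₀‖ ≤ 1)
    (hspec : spectrum ℂ Q₀ = Complex.ofReal '' Set.Icc (0 : ℝ) 1)
    (P Q : WithLp 2 (K × K) →L[ℂ] WithLp 2 (K × K))
    (hP : ∀ x y : K,
      P ((WithLp.equiv 2 (K × K)).symm (x, y)) = (WithLp.equiv 2 (K × K)).symm (x, 0))
    (hQ : ∀ x y : K,
      Q ((WithLp.equiv 2 (K × K)).symm (x, y)) =
        (WithLp.equiv 2 (K × K)).symm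
          (Q₀ x + (CFC.sqrt Q₀) ((CFC.sqrt (1 - Q₀)) y),
           (CFC.sqrt Q₀) ((CFC.sqrt (1 - Q₀)) x) + (1 - Q₀) y)) :
    spectrum ℂ (P * Q + Q * P) = Complex.ofReal '' Set.Icc (-(1/4) : ℝ) 2 :=
  spectrum_anticommutator_eq_Icc_general Q₀ hpos hc hspec P Q hP hQ
end

section
/- Let P and Q be orthogonal projections on a nontrivial complex Hilbert space H. Then the supremum of the set of real parts of σ(PQ + QP) equals ‖PQ‖² + ‖PQ‖; in particular ‖PQ‖² + ‖PQ‖ ∈ σ(PQ + QP). -/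
/-!
With `S = P + Q` one has `PQ + QP = S² - S` and `S ≥ 0`, so by the spectral mapping theorem the
spectrum of `PQ + QP` is the image of `σ(S) ⊆ [0, ‖S‖]` under `k ↦ k² - k`, which is maximal at
`k = ‖S‖ ∈ σ(S)` once `‖S‖ ≥ 1`. The heart of the matter is the identity `‖P + Q‖ = 1 + ‖PQ‖`
for `PQ ≠ 0` (if `PQ = 0` then also `QP = (PQ)* = 0`). The upper bound comes from
`|⟪Py, Qy⟫| ≤ ‖PQ‖ ‖Py‖ ‖Qy‖`. For the lower bound, unit vectors `u ∈ ran P`, `x ∈ ran Q` give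
`⟪S(u + x), u + x⟫ ≥ (1 + Re⟪u, x⟫) ‖u + x‖²`, and `u = Px / ‖Px‖` for a unit `x ∈ ran Q` gives
`Re⟪u, x⟫ = ‖Px‖`.
-/

open scoped InnerProductSpace
open RCLike

namespace IsStarProjection

variable {𝕜 H : Type*} [RCLike 𝕜] [NormedAddCommGroup H] [InnerProductSpace 𝕜 H] [CompleteSpace H]
  {p q : H →L[𝕜] H}

lemma apply_apply_s16 (hp : IsStarProjection p) (x : H) : p (p x) = p x := by
  rw [← mul_apply_eq_comp, hp.isIdempotentElem.eq]

lemma re_inner_apply_self (hp : IsStarProjection p) (x : H) : re ⟪p x, x⟫_𝕜 = ‖p x‖ ^ 2 := by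
  have h : ⟪p (p x), x⟫_𝕜 = ⟪p x, p x⟫_𝕜 := hp.isSelfAdjoint.isSymmetric (p x) x
  rw [hp.apply_apply_s16] at h
  rw [h, inner_self_eq_norm_sq]

lemma norm_apply_le_s16 (hp : IsStarProjection p) (x : H) : ‖p x‖ ≤ ‖x‖ := by
  have h := hp.re_inner_apply_self x ▸ re_inner_le_norm (p x) x
  nlinarith [norm_nonneg (p x), norm_nonneg x]

lemma re_inner_le_norm_apply (hp : IsStarProjection p) {u : H} (hu : p u = u) (y : H) :
    re ⟪u, y⟫_𝕜 ≤ ‖u‖ * ‖p y‖ := by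
  have h : ⟪u, y⟫_𝕜 = ⟪u, p y⟫_𝕜 := by
    conv_lhs => rw [← hu]
    exact hp.isSelfAdjoint.isSymmetric u y
  exact h ▸ re_inner_le_norm u (p y)

lemma re_inner_add_apply_self (hp : IsStarProjection p) (hq : IsStarProjection q) (y : H) :
    re ⟪(p + q) y, y⟫_𝕜 = ‖p y‖ ^ 2 + ‖q y‖ ^ 2 := by
  rw [add_apply, inner_add_left, map_add, hp.re_inner_apply_self, hq.re_inner_apply_self]

lemma re_inner_apply_le_norm_mul (hp : IsStarProjection p) (hq : IsStarProjection q) (y : H) :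
    re ⟪p y, q y⟫_𝕜 ≤ ‖p y‖ * (‖p * q‖ * ‖q y‖) := by
  have h : (p * q) (q y) = p (q y) := by
    rw [mul_apply_eq_comp, hq.apply_apply_s16]
  calc re ⟪p y, q y⟫_𝕜 ≤ ‖p y‖ * ‖p (q y)‖ := hp.re_inner_le_norm_apply (hp.apply_apply_s16 y) (q y)
    _ ≤ ‖p y‖ * (‖p * q‖ * ‖q y‖) := by
      gcongr
      exact h ▸ (p * q).le_opNorm (q y)

lemma norm_add_le_one_add_norm_mul (hp : IsStarProjection p) (hq : IsStarProjection q) :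
    ‖p + q‖ ≤ 1 + ‖p * q‖ := by
  refine (p + q).opNorm_le_bound (by positivity) fun y ↦ ?_
  have hsq : ‖(p + q) y‖ ^ 2 ≤ (1 + ‖p * q‖) * (‖p y‖ ^ 2 + ‖q y‖ ^ 2) := by
    rw [add_apply, norm_add_sq (𝕜 := 𝕜)]
    nlinarith [hp.re_inner_apply_le_norm_mul hq y, sq_nonneg (‖p y‖ - ‖q y‖), norm_nonneg (p * q)]
  have hform : ‖p y‖ ^ 2 + ‖q y‖ ^ 2 ≤ ‖(p + q) y‖ * ‖y‖ :=
    hp.re_inner_add_apply_self hq y ▸ re_inner_le_norm _ _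
  have h : ‖(p + q) y‖ * ‖(p + q) y‖ ≤ ‖(p + q) y‖ * ((1 + ‖p * q‖) * ‖y‖) := by
    nlinarith [hsq.trans (mul_le_mul_of_nonneg_left hform (by positivity))]
  rcases (norm_nonneg ((p + q) y)).eq_or_lt with h0 | hpos
  · rw [← h0]
    positivity
  · exact le_of_mul_le_mul_left h hpos

lemma one_add_re_inner_le_norm_add (hp : IsStarProjection p) (hq : IsStarProjection q) {u x : H}
    (hu : p u = u) (hx : q x = x) (hu1 : ‖u‖ = 1) (hx1 : ‖x‖ = 1) :
    1 + re ⟪u, x⟫_𝕜 ≤ ‖p + q‖ := by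
  set r := re ⟪u, x⟫_𝕜
  have hPy : 1 + r ≤ ‖p (u + x)‖ := by
    have h := hp.re_inner_le_norm_apply hu (u + x)
    rwa [inner_add_right, map_add, inner_self_eq_norm_sq, hu1, one_mul, one_pow] at h
  have hQy : 1 + r ≤ ‖q (u + x)‖ := by
    have h := hq.re_inner_le_norm_apply hx (u + x)
    rwa [inner_add_right, map_add, inner_self_eq_norm_sq, hx1, inner_re_symm, one_mul, one_pow,
      add_comm] at h
  have hy : ‖u + x‖ ^ 2 = 2 * (1 + r) := by
    rw [norm_add_sq (𝕜 := 𝕜), hu1, hx1]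
    ring
  have hform : ‖p (u + x)‖ ^ 2 + ‖q (u + x)‖ ^ 2 ≤ ‖p + q‖ * ‖u + x‖ ^ 2 := by
    rw [← hp.re_inner_add_apply_self hq, sq, ← mul_assoc]
    exact (re_inner_le_norm _ _).trans (by gcongr; exact (p + q).le_opNorm _)
  nlinarith [sq_nonneg (‖u + x‖), norm_nonneg (p + q)]

lemma norm_apply_add_norm_le (hp : IsStarProjection p) (hq : IsStarProjection q) {x : H}
    (hx : q x = x) (hpx : p x ≠ 0) : ‖p x‖ + ‖x‖ ≤ ‖p + q‖ * ‖x‖ := by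
  have hx0 : x ≠ 0 := by
    rintro rfl
    exact hpx (map_zero p)
  have hc : 0 < ‖p x‖ := norm_pos_iff.2 hpx
  have hn : 0 < ‖x‖ := norm_pos_iff.2 hx0
  have key := hp.one_add_re_inner_le_norm_add hq (u := (‖p x‖ : 𝕜)⁻¹ • p x)
    (x := (‖x‖ : 𝕜)⁻¹ • x) (by rw [map_smul, hp.apply_apply_s16]) (by rw [map_smul, hx])
    (norm_smul_inv_norm hpx) (norm_smul_inv_norm hx0)
  have hr : re ⟪(‖p x‖ : 𝕜)⁻¹ • p x, (‖x‖ : 𝕜)⁻¹ • x⟫_𝕜 = ‖p x‖ / ‖x‖ := by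
    rw [inner_smul_left, inner_smul_right, ← ofReal_inv, ← ofReal_inv, conj_ofReal, re_ofReal_mul,
      re_ofReal_mul, hp.re_inner_apply_self]
    field_simp
  rw [hr] at key
  calc ‖p x‖ + ‖x‖ = (1 + ‖p x‖ / ‖x‖) * ‖x‖ := by field_simp; ring
    _ ≤ ‖p + q‖ * ‖x‖ := by gcongr

lemma norm_mul_add_one_le_norm_add (hp : IsStarProjection p) (hq : IsStarProjection q)
    (hpq : p * q ≠ 0) : ‖p * q‖ + 1 ≤ ‖p + q‖ := by
  have bound (z : H) (hz : (p * q) z ≠ 0) : ‖(p * q) z‖ + ‖q z‖ ≤ ‖p + q‖ * ‖q z‖ :=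
    hp.norm_apply_add_norm_le hq (hq.apply_apply_s16 z) hz
  have one_le : 1 ≤ ‖p + q‖ := by
    obtain ⟨z, hz⟩ : ∃ z, (p * q) z ≠ 0 := by
      by_contra! h
      exact hpq (ContinuousLinearMap.ext h)
    nlinarith [bound z hz, norm_pos_iff.2 hz, norm_nonneg (q z)]
  suffices ‖p * q‖ ≤ ‖p + q‖ - 1 by linarith
  refine (p * q).opNorm_le_bound (by linarith) fun z ↦ ?_
  by_cases hz : (p * q) z = 0
  · rw [hz, norm_zero]
    exact mul_nonneg (by linarith) (norm_nonneg z)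
  · calc ‖(p * q) z‖ ≤ (‖p + q‖ - 1) * ‖q z‖ := by linarith [bound z hz]
      _ ≤ (‖p + q‖ - 1) * ‖z‖ := by
        gcongr
        exact hq.norm_apply_le_s16 z

lemma norm_add_eq_one_add_norm_mul (hp : IsStarProjection p) (hq : IsStarProjection q)
    (hpq : p * q ≠ 0) : ‖p + q‖ = 1 + ‖p * q‖ :=
  (hp.norm_add_le_one_add_norm_mul hq).antisymm
    (by linarith [hp.norm_mul_add_one_le_norm_add hq hpq])

end IsStarProjection

lemma isGreatest_spectrum_sq_sub_self {A : Type*} [CStarAlgebra A] [PartialOrder A]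
    [StarOrderedRing A] [Nontrivial A] {a : A} (ha : 0 ≤ a) (h1 : 1 ≤ ‖a‖) :
    IsGreatest (spectrum ℝ (a ^ 2 - a)) (‖a‖ ^ 2 - ‖a‖) := by
  have hcfc : a ^ 2 - a = cfc (fun x : ℝ ↦ x ^ 2 - x) a := by
    rw [cfc_sub _ _ a, cfc_pow_id a 2, cfc_id' ℝ a]
  rw [hcfc, cfc_map_spectrum _ a]
  refine ⟨⟨‖a‖, CStarAlgebra.norm_mem_spectrum_of_nonneg ha, rfl⟩, ?_⟩
  rintro - ⟨x, hx, rfl⟩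
  have h0 : 0 ≤ x := spectrum_nonneg_of_nonneg ha hx
  have hle : x ≤ ‖a‖ := (Real.le_norm_self x).trans (spectrum.norm_le_norm_of_mem hx)
  nlinarith

/-- For orthogonal projections `P, Q` on a nontrivial complex Hilbert space,
`sup { Re μ : μ ∈ σ(PQ + QP) } = ‖PQ‖² + ‖PQ‖`, and this value lies in `σ(PQ + QP)`. -/
theorem sSup_re_spectrum_anticommutator
    {H : Type*} [NormedAddCommGroup H] [InnerProductSpace ℂ H] [CompleteSpace H]
    [Nontrivial H]
    (P Q : H →L[ℂ] H) (hP : IsSelfAdjoint P) (hP2 : P * P = P)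
    (hQ : IsSelfAdjoint Q) (hQ2 : Q * Q = Q) :
    sSup (Complex.re '' spectrum ℂ (P * Q + Q * P)) = ‖P * Q‖ ^ 2 + ‖P * Q‖ ∧
    ((‖P * Q‖ ^ 2 + ‖P * Q‖ : ℝ) : ℂ) ∈ spectrum ℂ (P * Q + Q * P) := by
  have hp : IsStarProjection P := ⟨hP2, hP⟩
  have hq : IsStarProjection Q := ⟨hQ2, hQ⟩
  have hS : P * Q + Q * P = (P + Q) ^ 2 - (P + Q) := by
    rw [sq, add_mul, mul_add, mul_add, hP2, hQ2]
    abel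
  have hSnn : 0 ≤ P + Q := add_nonneg hp.nonneg hq.nonneg
  have hA : IsSelfAdjoint (P * Q + Q * P) := by
    have hSsa := IsSelfAdjoint.of_nonneg hSnn
    exact hS ▸ (hSsa.pow 2).sub hSsa
  suffices h : IsGreatest (spectrum ℝ (P * Q + Q * P)) (‖P * Q‖ ^ 2 + ‖P * Q‖) by
    refine ⟨?_, (spectrum.algebraMap_mem_iff ℂ).2 h.1⟩
    rw [← hA.spectrumRestricts.image] at h
    exact h.csSup_eq
  rcases eq_or_ne (P * Q) 0 with hpq | hpq
  · have hqp : Q * P = 0 := by simpa [hP.star_eq, hQ.star_eq] using congr(star $hpq)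
    simp [hpq, hqp]
  · have hnorm := hp.norm_add_eq_one_add_norm_mul hq hpq
    rw [hS, show ‖P * Q‖ ^ 2 + ‖P * Q‖ = ‖P + Q‖ ^ 2 - ‖P + Q‖ by rw [hnorm]; ring]
    exact isGreatest_spectrum_sq_sub_self hSnn (by rw [hnorm]; linarith [norm_nonneg (P * Q)])
end
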